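/- arXiv:1906.02935 — 4 statements merged into one kernel-verified Lean document; each statement's English description precedes it below -/
import Mathlib

section
/- Let g be a finite-dimensional complex semisimple Lie algebra, p = l ⊕ u a parabolic subalgebra with Levi factor l, and let N ↪ N' be an embedding of weight l-modules with N simple. Then the almost-simple quotient Ind_p(N) embeds into the almost-simple quotient Ind_p(N'). -/
/-!
Let `W ⊆ M × M'` be the `g`-submodule generated by the graph `{(j n, j' (φ n))}`. The graph is
stable under `p = l ⊕ u`, and `g = p + u⁻`, so `W = U(u⁻) · graph ⊆ graph + (u⁻M × u⁻M')`.
Since `j(N) ∩ u⁻M = 0` and `j'(N') ∩ u⁻M' = 0`, the submodule `{m' | (0, m') ∈ W}` of `M'`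
meets `j'(N')` trivially, hence vanishes by almost-simplicity of `M'`; as `j(N)` generates `M`,
`W` is the graph of a `g`-homomorphism `ψ : M → M'`. Its kernel meets `j(N)` trivially, so `ψ`
is injective by almost-simplicity of `M`.
-/

/-- A Borel subalgebra: a maximal solvable Lie subalgebra. -/
def IsBorel (g : Type*) [LieRing g] [LieAlgebra ℂ g] (b : LieSubalgebra ℂ g) : Prop :=
  LieAlgebra.IsSolvable ↥b ∧
    ∀ b' : LieSubalgebra ℂ g, LieAlgebra.IsSolvable ↥b' → b ≤ b' → b' = b

/-- A parabolic subalgebra `p = l ⊕ u` of `g` together with a Levi decomposition: the Levi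
factor `l`, the nilradical `u` and the opposite nilradical `u⁻`, satisfying
`g = u⁻ ⊕ l ⊕ u`, `[l,u] ⊆ u`, `[l,u⁻] ⊆ u⁻`, `u, u⁻` nilpotent, and `p = l ⊔ u` contains a
Borel subalgebra. -/
structure ParabolicDecomp (g : Type*) [LieRing g] [LieAlgebra ℂ g] where
  l : LieSubalgebra ℂ g
  u : LieSubalgebra ℂ g
  uminus : LieSubalgebra ℂ g
  lu : ∀ x ∈ l, ∀ y ∈ u, ⁅x, y⁆ ∈ u
  lum : ∀ x ∈ l, ∀ y ∈ uminus, ⁅x, y⁆ ∈ uminus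
  u_nilpotent : LieRing.IsNilpotent ↥u
  um_nilpotent : LieRing.IsNilpotent ↥uminus
  sup_top : l.toSubmodule ⊔ u.toSubmodule ⊔ uminus.toSubmodule = ⊤
  disj_lu : Disjoint l.toSubmodule u.toSubmodule
  disj_lum : Disjoint (l.toSubmodule ⊔ u.toSubmodule) uminus.toSubmodule
  parabolic : ∃ b : LieSubalgebra ℂ g, IsBorel g b ∧ b ≤ l ⊔ u

/-- The subspace `M^u` of vectors of a `g`-module `M` annihilated by the nilradical `u`. -/
def uInvariants {g : Type*} [LieRing g] [LieAlgebra ℂ g] (D : ParabolicDecomp g)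
    (M : Type*) [AddCommGroup M] [Module ℂ M] [LieRingModule g M] [LieModule ℂ g M] :
    Submodule ℂ M where
  carrier := {v : M | ∀ x ∈ D.u, ⁅x, v⁆ = 0}
  add_mem' := by
    intro a b ha hb x hx
    rw [lie_add, ha x hx, hb x hx, add_zero]
  zero_mem' := by
    intro x hx
    simp
  smul_mem' := by
    intro c a ha x hx
    rw [lie_smul, ha x hx, smul_zero]

/-- The almost-simple quotient `Ind_p(N)` of the parabolic induction
`U(g) ⊗_{U(p)} N` of an `l`-module `N` (with `u` acting by zero), encoded by its
characteristic properties: it contains a canonical copy `j : N ↪ M` of `N`, killed by `u`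
and `l`-equivariant, which generates `M`; every non-zero `g`-submodule of `M` meets `j(N)`
non-trivially (almost-simplicity); and, by Poincaré–Birkhoff–Witt, `M = j(N) ⊕ u⁻·M`. -/
structure AlmostSimpleInduction {g : Type*} [LieRing g] [LieAlgebra ℂ g]
    (D : ParabolicDecomp g)
    (N : Type*) [AddCommGroup N] [Module ℂ N] [LieRingModule D.l N] [LieModule ℂ D.l N]
    (M : Type*) [AddCommGroup M] [Module ℂ M] [LieRingModule g M] [LieModule ℂ g M] where
  j : N →ₗ[ℂ] M
  inj : Function.Injective j
  equivariant : ∀ (x : D.l) (n : N), j ⁅x, n⁆ = ⁅(x : g), j n⁆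
  u_annihilates : ∀ x ∈ D.u, ∀ n : N, ⁅x, j n⁆ = 0
  generates : LieSubmodule.lieSpan ℂ g (Set.range j) = ⊤
  almost_simple : ∀ Q : LieSubmodule ℂ g M, Q ≠ ⊥ → ∃ n : N, j n ≠ 0 ∧ j n ∈ Q
  pbw_compl : IsCompl (LinearMap.range j)
    (Submodule.span ℂ {m : M | ∃ x ∈ D.uminus, ∃ w : M, m = ⁅x, w⁆})

section Prod

variable {R L M M' : Type*} [CommRing R] [LieRing L]
  [AddCommGroup M] [Module R M] [LieRingModule L M]
  [AddCommGroup M'] [Module R M'] [LieRingModule L M']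

namespace Prod

instance instLieRingModule : LieRingModule L (M × M') where
  bracket x m := (⁅x, m.1⁆, ⁅x, m.2⁆)
  add_lie x y m := Prod.ext (add_lie x y m.1) (add_lie x y m.2)
  lie_add x m n := Prod.ext (lie_add x m.1 n.1) (lie_add x m.2 n.2)
  leibniz_lie x y m := Prod.ext (leibniz_lie x y m.1) (leibniz_lie x y m.2)

instance instLieModule [LieAlgebra R L] [LieModule R L M] [LieModule R L M'] :
    LieModule R L (M × M') where
  smul_lie t x m := Prod.ext (smul_lie t x m.1) (smul_lie t x m.2)
  lie_smul t x m := Prod.ext (lie_smul t x m.1) (lie_smul t x m.2)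

end Prod

namespace LieModuleHom

variable (R L M M')

def fst : M × M' →ₗ⁅R,L⁆ M :=
  { LinearMap.fst R M M' with map_lie' := rfl }

def inr : M' →ₗ⁅R,L⁆ M × M' :=
  { LinearMap.inr R M M' with map_lie' := Prod.ext (lie_zero _).symm rfl }

end LieModuleHom

theorem Submodule.exists_linearMap_mem_iff (W : Submodule R (M × M'))
    (hfst : ∀ m, ∃ m', (m, m') ∈ W) (hsnd : ∀ m', ((0 : M), m') ∈ W → m' = 0) :
    ∃ f : M →ₗ[R] M', ∀ m m', (m, m') ∈ W ↔ f m = m' := by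
  have hbij : Function.Bijective (LinearMap.fst R M M' ∘ₗ W.subtype) := by
    refine ⟨?_, fun m ↦ (hfst m).elim fun m' h ↦ ⟨⟨(m, m'), h⟩, rfl⟩⟩
    rintro ⟨⟨m, m₁⟩, h₁⟩ ⟨⟨_, m₂⟩, h₂⟩ rfl
    have := hsnd (m₁ - m₂) (by simpa using W.sub_mem h₁ h₂)
    simp [sub_eq_zero.mp this]
  let e := LinearEquiv.ofBijective _ hbij
  refine ⟨LinearMap.snd R M M' ∘ₗ W.subtype ∘ₗ e.symm.toLinearMap, fun m m' ↦ ⟨fun h ↦ ?_, ?_⟩⟩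
  · have : e.symm m = ⟨(m, m'), h⟩ := e.symm_apply_eq.mpr rfl
    change ((e.symm m : W) : M × M').2 = m'
    rw [this]
  · rintro rfl
    have hfst : (e.symm m : M × M').1 = m := e.apply_symm_apply m
    have h := (e.symm m).2
    rw [← Prod.mk.eta (p := (e.symm m : M × M')), hfst] at h
    exact h

theorem LieSubmodule.exists_lieModuleHom_mem_iff (W : LieSubmodule R L (M × M'))
    (hfst : W.map (LieModuleHom.fst R L M M') = ⊤)
    (hinr : W.comap (LieModuleHom.inr R L M M') = ⊥) :
    ∃ f : M →ₗ⁅R,L⁆ M', ∀ m m', (m, m') ∈ W ↔ f m = m' := by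
  obtain ⟨f, hf⟩ := W.toSubmodule.exists_linearMap_mem_iff
    (fun m ↦ by
      obtain ⟨⟨_, m'⟩, hm, rfl⟩ := (W.mem_map m).mp (hfst ▸ LieSubmodule.mem_top m)
      exact ⟨m', hm⟩)
    (fun m' hm' ↦ by
      have : m' ∈ W.comap (LieModuleHom.inr R L M M') := hm'
      rwa [hinr, LieSubmodule.mem_bot] at this)
  refine ⟨{ f with map_lie' := fun {x m} ↦ (hf _ _).mp ?_ }, hf⟩
  exact W.lie_mem (x := x) ((hf m (f m)).mpr rfl)

end Prod

namespace LieSubalgebra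

variable {R L : Type*} [CommRing R] [LieRing L] [LieAlgebra R L] (n : LieSubalgebra R L)
  (M : Type*) [AddCommGroup M] [Module R M] [LieRingModule L M]

/-- The subspace `n · M`. -/
def bracketSpan : Submodule R M :=
  Submodule.span R {m | ∃ x ∈ n, ∃ w : M, m = ⁅x, w⁆}

variable {n M}

theorem lie_mem_bracketSpan {x : L} (hx : x ∈ n) (w : M) : ⁅x, w⁆ ∈ n.bracketSpan M :=
  Submodule.subset_span ⟨x, hx, w, rfl⟩

theorem bracketSpan_prod_le (M' : Type*) [AddCommGroup M'] [Module R M'] [LieRingModule L M'] :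
    n.bracketSpan (M × M') ≤ (n.bracketSpan M).prod (n.bracketSpan M') := by
  refine Submodule.span_le.mpr ?_
  rintro _ ⟨x, hx, w, rfl⟩
  exact ⟨lie_mem_bracketSpan hx w.1, lie_mem_bracketSpan hx w.2⟩

/-- The point is that the `n`-submodule generated by `V` is already stable under `p + n = g`. -/
theorem lieSpan_le_sup_bracketSpan [LieModule R L M] {p : Submodule R L}
    (hpn : p ⊔ n.toSubmodule = ⊤) {V : Submodule R M} (hV : ∀ x ∈ p, ∀ v ∈ V, ⁅x, v⁆ ∈ V) :
    (LieSubmodule.lieSpan R L (V : Set M) : Submodule R M) ≤ V ⊔ n.bracketSpan M := by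
  let U := LieSubmodule.lieSpan R n (V : Set M)
  have hU_le : (U : Submodule R M) ≤ V ⊔ n.bracketSpan M := by
    intro m hm
    induction hm using LieSubmodule.lieSpan_induction with
    | mem v hv => exact Submodule.mem_sup_left hv
    | zero => exact zero_mem _
    | add _ _ _ _ h₁ h₂ => exact add_mem h₁ h₂
    | smul t _ _ h => exact Submodule.smul_mem _ t h
    | lie y w _ _ => exact Submodule.mem_sup_right (lie_mem_bracketSpan y.2 w)
  have hU_lie : ∀ m ∈ U, ∀ x : L, ⁅x, m⁆ ∈ U := by
    intro m hm
    induction hm using LieSubmodule.lieSpan_induction with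
    | mem v hv =>
      intro x
      have hx : x ∈ p ⊔ n.toSubmodule := hpn ▸ Submodule.mem_top
      obtain ⟨a, ha, c, hc, rfl⟩ := Submodule.mem_sup.mp hx
      rw [add_lie]
      exact add_mem (LieSubmodule.subset_lieSpan (hV a ha v hv))
        (U.lie_mem (x := (⟨c, hc⟩ : n)) (LieSubmodule.subset_lieSpan hv))
    | zero => simp
    | add _ _ _ _ h₁ h₂ => exact fun x ↦ by rw [lie_add]; exact add_mem (h₁ x) (h₂ x)
    | smul t _ _ h => exact fun x ↦ by rw [lie_smul]; exact Submodule.smul_mem _ t (h x)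
    | lie y w _ h =>
      intro x
      rw [coe_bracket_of_module, leibniz_lie]
      exact add_mem (h ⁅x, (y : L)⁆) (U.lie_mem (x := y) (h x))
  let U' : LieSubmodule R L M := { (U : Submodule R M) with lie_mem := fun hm ↦ hU_lie _ hm _ }
  have hspan : LieSubmodule.lieSpan R L (V : Set M) ≤ U' :=
    LieSubmodule.lieSpan_le.mpr LieSubmodule.subset_lieSpan
  exact ((LieSubmodule.toSubmodule_le_toSubmodule _ _).mpr hspan).trans hU_le

end LieSubalgebra

namespace AlmostSimpleInduction

variable {g : Type*} [LieRing g] [LieAlgebra ℂ g] {D : ParabolicDecomp g}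
  {N : Type*} [AddCommGroup N] [Module ℂ N] [LieRingModule D.l N] [LieModule ℂ D.l N]
  {M : Type*} [AddCommGroup M] [Module ℂ M] [LieRingModule g M] [LieModule ℂ g M]
  (asi : AlmostSimpleInduction D N M)

theorem eq_zero_of_j_mem_bracketSpan {n : N} (hn : asi.j n ∈ D.uminus.bracketSpan M) : n = 0 :=
  asi.inj <| by
    rw [map_zero]
    exact Submodule.disjoint_def.mp asi.pbw_compl.disjoint _ (LinearMap.mem_range_self _ n) hn

theorem eq_bot_of_forall_j_mem {Q : LieSubmodule ℂ g M} (hQ : ∀ n, asi.j n ∈ Q → n = 0) :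
    Q = ⊥ := by
  by_contra hne
  obtain ⟨n, hn, hnQ⟩ := asi.almost_simple Q hne
  exact hn (by rw [hQ n hnQ, map_zero])

theorem add_lie_j {a b : g} (ha : a ∈ D.l) (hb : b ∈ D.u) (n : N) :
    ⁅a + b, asi.j n⁆ = asi.j ⁅(⟨a, ha⟩ : D.l), n⁆ := by
  rw [add_lie, asi.u_annihilates b hb, add_zero, asi.equivariant]

variable {N' : Type*} [AddCommGroup N'] [Module ℂ N'] [LieRingModule D.l N'] [LieModule ℂ D.l N']
  {M' : Type*} [AddCommGroup M'] [Module ℂ M'] [LieRingModule g M'] [LieModule ℂ g M']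
  (asi' : AlmostSimpleInduction D N' M') {φ : N →ₗ[ℂ] N'}

theorem lie_mem_range_prod (hφ : ∀ (x : D.l) (n : N), φ ⁅x, n⁆ = ⁅x, φ n⁆) {x : g}
    (hx : x ∈ D.l.toSubmodule ⊔ D.u.toSubmodule) {v : M × M'}
    (hv : v ∈ LinearMap.range (asi.j.prod (asi'.j ∘ₗ φ))) :
    ⁅x, v⁆ ∈ LinearMap.range (asi.j.prod (asi'.j ∘ₗ φ)) := by
  obtain ⟨a, ha, b, hb, rfl⟩ := Submodule.mem_sup.mp hx
  obtain ⟨n, rfl⟩ := hv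
  refine ⟨⁅(⟨a, ha⟩ : D.l), n⁆, Prod.ext (asi.add_lie_j ha hb n).symm ?_⟩
  change asi'.j (φ _) = ⁅a + b, asi'.j (φ n)⁆
  rw [hφ, asi'.add_lie_j ha hb]

theorem eq_zero_of_mem_range_prod_sup {n' : N'}
    (h : ((0 : M), asi'.j n') ∈ LinearMap.range (asi.j.prod (asi'.j ∘ₗ φ)) ⊔
      (D.uminus.bracketSpan M).prod (D.uminus.bracketSpan M')) :
    n' = 0 := by
  obtain ⟨_, ⟨n, rfl⟩, q, hq, hsum⟩ := Submodule.mem_sup.mp h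
  have hn : n = 0 := asi.eq_zero_of_j_mem_bracketSpan <| by
    have hsum₁ : asi.j n + q.1 = 0 := congrArg Prod.fst hsum
    rw [eq_neg_of_add_eq_zero_left hsum₁]
    exact neg_mem hq.1
  have hq₂ : q.2 = asi'.j n' := by simpa [hn] using congrArg Prod.snd hsum
  exact asi'.eq_zero_of_j_mem_bracketSpan (hq₂ ▸ hq.2)

end AlmostSimpleInduction

theorem almostSimpleInduction_embedding_general
    (g : Type*) [LieRing g] [LieAlgebra ℂ g]
    (D : ParabolicDecomp g)
    (N : Type*) [AddCommGroup N] [Module ℂ N] [LieRingModule D.l N] [LieModule ℂ D.l N]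
    (N' : Type*) [AddCommGroup N'] [Module ℂ N'] [LieRingModule D.l N'] [LieModule ℂ D.l N']
    (M : Type*) [AddCommGroup M] [Module ℂ M] [LieRingModule g M] [LieModule ℂ g M]
    (M' : Type*) [AddCommGroup M'] [Module ℂ M'] [LieRingModule g M'] [LieModule ℂ g M']
    (asi : AlmostSimpleInduction D N M)
    (asi' : AlmostSimpleInduction D N' M')
    (φ : N →ₗ[ℂ] N') (hφinj : Function.Injective φ)
    (hφequiv : ∀ (x : D.l) (n : N), φ ⁅x, n⁆ = ⁅x, φ n⁆) :
    ∃ ψ : M →ₗ[ℂ] M', Function.Injective ψ ∧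
      (∀ (x : g) (m : M), ψ ⁅x, m⁆ = ⁅x, ψ m⁆) ∧
      ∀ n : N, ψ (asi.j n) = asi'.j (φ n) := by
  set Γ := LinearMap.range (asi.j.prod (asi'.j ∘ₗ φ))
  set W := LieSubmodule.lieSpan ℂ g (Γ : Set (M × M'))
  have hΓW : ∀ n, (asi.j n, asi'.j (φ n)) ∈ W := fun n ↦ LieSubmodule.subset_lieSpan ⟨n, rfl⟩
  have hW : (W : Submodule ℂ (M × M')) ≤
      Γ ⊔ (D.uminus.bracketSpan M).prod (D.uminus.bracketSpan M') :=
    (LieSubalgebra.lieSpan_le_sup_bracketSpan D.sup_top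
      (fun _ hx _ hv ↦ asi.lie_mem_range_prod asi' hφequiv hx hv)).trans
      (sup_le_sup_left (LieSubalgebra.bracketSpan_prod_le M') _)
  have hfst : W.map (LieModuleHom.fst ℂ g M M') = ⊤ := by
    rw [eq_top_iff, ← asi.generates, LieSubmodule.lieSpan_le]
    rintro _ ⟨n, rfl⟩
    exact ⟨_, hΓW n, rfl⟩
  have hinr : W.comap (LieModuleHom.inr ℂ g M M') = ⊥ :=
    asi'.eq_bot_of_forall_j_mem fun _ hn' ↦ asi.eq_zero_of_mem_range_prod_sup asi' (hW hn')
  obtain ⟨ψ, hψ⟩ := W.exists_lieModuleHom_mem_iff hfst hinr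
  have hψj : ∀ n, ψ (asi.j n) = asi'.j (φ n) := fun n ↦ (hψ _ _).mp (hΓW n)
  refine ⟨ψ, (LieModuleHom.ker_eq_bot ψ).mp ?_, ψ.map_lie, hψj⟩
  refine asi.eq_bot_of_forall_j_mem fun n hn ↦ hφinj (asi'.inj ?_)
  rw [LieModuleHom.mem_ker, hψj] at hn
  rw [hn, map_zero, map_zero]

/-- Let `g` be a finite-dimensional complex semisimple Lie algebra, `p = l ⊕ u` a parabolic
subalgebra, and `φ : N ↪ N'` an embedding of weight `l`-modules with `N` simple.  Then the
almost-simple quotient `Ind_p(N)` embeds into the almost-simple quotient `Ind_p(N')` as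
`g`-modules, compatibly with the canonical copies of `N` and `N'`. -/
theorem almostSimpleInduction_embedding
    (g : Type*) [LieRing g] [LieAlgebra ℂ g] [FiniteDimensional ℂ g]
    [LieAlgebra.IsSemisimple ℂ g]
    (D : ParabolicDecomp g)
    (h : LieSubalgebra ℂ g) [h.IsCartanSubalgebra] (hhl : h ≤ D.l)
    (N : Type*) [AddCommGroup N] [Module ℂ N] [LieRingModule D.l N] [LieModule ℂ D.l N]
    (N' : Type*) [AddCommGroup N'] [Module ℂ N'] [LieRingModule D.l N'] [LieModule ℂ D.l N']
    (M : Type*) [AddCommGroup M] [Module ℂ M] [LieRingModule g M] [LieModule ℂ g M]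
    (M' : Type*) [AddCommGroup M'] [Module ℂ M'] [LieRingModule g M'] [LieModule ℂ g M']
    (asi : AlmostSimpleInduction D N M)
    (asi' : AlmostSimpleInduction D N' M')
    [Nontrivial N] (hNsimple : ∀ Q : LieSubmodule ℂ D.l N, Q = ⊥ ∨ Q = ⊤)
    (hNweight : Submodule.span ℂ {v : N | ∃ χ : g → ℂ, ∀ (x : g) (hx : x ∈ h),
      ⁅(⟨x, hhl hx⟩ : D.l), v⁆ = χ x • v} = ⊤)
    (hN'weight : Submodule.span ℂ {v : N' | ∃ χ : g → ℂ, ∀ (x : g) (hx : x ∈ h),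
      ⁅(⟨x, hhl hx⟩ : D.l), v⁆ = χ x • v} = ⊤)
    (φ : N →ₗ[ℂ] N') (hφinj : Function.Injective φ)
    (hφequiv : ∀ (x : D.l) (n : N), φ ⁅x, n⁆ = ⁅x, φ n⁆) :
    ∃ ψ : M →ₗ[ℂ] M', Function.Injective ψ ∧
      (∀ (x : g) (m : M), ψ ⁅x, m⁆ = ⁅x, ψ m⁆) ∧
      ∀ n : N, ψ (asi.j n) = asi'.j (φ n) :=
  almostSimpleInduction_embedding_general g D N N' M M' asi asi' φ hφinj hφequiv
end

section
/- Let g be a finite-dimensional complex semisimple Lie algebra, p = l ⊕ u a parabolic subalgebra, C a weight l-module with support a single coset of h_s^*, and P = Ind_p(C) the associated almost-simple quotient of the parabolic induction. If v is a non-zero weight vector of P, then (U(u)·v) ∩ (1 ⊗ C) ≠ 0. -/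
/-- The `μ`-weight space of a `g`-module with respect to the Cartan subalgebra `h`. -/
def gWeightSpace {g : Type*} [LieRing g] [LieAlgebra ℂ g] (h : LieSubalgebra ℂ g)
    (M : Type*) [AddCommGroup M] [Module ℂ M] [LieRingModule g M] [LieModule ℂ g M]
    (μ : g → ℂ) : Submodule ℂ M where
  carrier := {v : M | ∀ x ∈ h, ⁅x, v⁆ = μ x • v}
  add_mem' := by
    intro a b ha hb x hx
    rw [lie_add, ha x hx, hb x hx, smul_add]
  zero_mem' := by
    intro x hx
    simp
  smul_mem' := by
    intro c a ha x hx
    rw [lie_smul, ha x hx, smul_comm]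

/-- The `μ`-weight space of an `l`-module with respect to the Cartan subalgebra `h ≤ l`. -/
def lWeightSpace {g : Type*} [LieRing g] [LieAlgebra ℂ g] (D : ParabolicDecomp g)
    (h : LieSubalgebra ℂ g) (hhl : h ≤ D.l)
    (N : Type*) [AddCommGroup N] [Module ℂ N] [LieRingModule D.l N] [LieModule ℂ D.l N]
    (μ : g → ℂ) : Submodule ℂ N where
  carrier := {v : N | ∀ (x : g) (hx : x ∈ h), ⁅(⟨x, hhl hx⟩ : D.l), v⁆ = μ x • v}
  add_mem' := by
    intro a b ha hb x hx
    rw [lie_add, ha x hx, hb x hx, smul_add]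
  zero_mem' := by
    intro x hx
    simp
  smul_mem' := by
    intro c a ha x hx
    rw [lie_smul, ha x hx, smul_comm]

/-!
Put `V = U(u) · v`. The vectors whose `U(u)`-span is finite-dimensional form a `g`-submodule
containing `1 ⊗ C`, so `V` is finite-dimensional; and `V` is `h`-stable because `v` is an
`h`-weight vector and `h` normalises `u`. Since `h` is abelian and has no zero weight on `u`, we
have `u ⊆ [h, u]`, so Lie's theorem for the solvable algebra `h ⊕ u` yields `0 ≠ w ∈ V` killed
by `u`. Finally `P = (1 ⊗ C) ⊕ u⁻P`, and `u⁻P` contains no non-zero `u`-invariant: the vectors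
whose `U(u)`-span stays inside `u⁻P` form a `g`-submodule missing `1 ⊗ C`, which vanishes by
almost-simplicity. Hence `w ∈ 1 ⊗ C`.
-/

open LieModule LieAlgebra

section StableSpan

variable (R : Type*) {g M : Type*} [CommRing R] [LieRing g] [AddCommGroup M] [Module R M]
  [LieRingModule g M]

/-- `U(u) · v`. -/
def stableSpan (u : Set g) (v : M) : Submodule R M :=
  sInf {Q | v ∈ Q ∧ ∀ x ∈ u, ∀ m ∈ Q, ⁅x, m⁆ ∈ Q}

variable {R} {u : Set g}

lemma mem_stableSpan_self (v : M) : v ∈ stableSpan R u v :=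
  Submodule.mem_sInf.mpr fun _ hQ ↦ hQ.1

lemma lie_mem_stableSpan {v : M} {x : g} (hx : x ∈ u) {m : M} (hm : m ∈ stableSpan R u v) :
    ⁅x, m⁆ ∈ stableSpan R u v :=
  Submodule.mem_sInf.mpr fun Q hQ ↦ hQ.2 x hx m (Submodule.mem_sInf.mp hm Q hQ)

lemma stableSpan_le {v : M} {Q : Submodule R M} (hv : v ∈ Q)
    (hQ : ∀ x ∈ u, ∀ m ∈ Q, ⁅x, m⁆ ∈ Q) : stableSpan R u v ≤ Q :=
  sInf_le ⟨hv, hQ⟩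

lemma stableSpan_add_le (p q : M) :
    stableSpan R u (p + q) ≤ stableSpan R u p ⊔ stableSpan R u q := by
  refine stableSpan_le (Submodule.add_mem_sup (mem_stableSpan_self p) (mem_stableSpan_self q)) ?_
  intro x hx m hm
  obtain ⟨a, ha, b, hb, rfl⟩ := Submodule.mem_sup.mp hm
  rw [lie_add]
  exact Submodule.add_mem_sup (lie_mem_stableSpan hx ha) (lie_mem_stableSpan hx hb)

lemma stableSpan_smul_le (c : R) (p : M) : stableSpan R u (c • p) ≤ stableSpan R u p :=
  stableSpan_le (Submodule.smul_mem _ c (mem_stableSpan_self p)) fun _ hx _ ↦ lie_mem_stableSpan hx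

variable [LieAlgebra R g] [LieModule R g M]

lemma stableSpan_le_span_singleton {p : M} (hp : ∀ x ∈ u, ⁅x, p⁆ = 0) :
    stableSpan R u p ≤ R ∙ p := by
  refine stableSpan_le (Submodule.mem_span_singleton_self p) fun x hx m hm ↦ ?_
  obtain ⟨c, rfl⟩ := Submodule.mem_span_singleton.mp hm
  rw [lie_smul, hp x hx, smul_zero]
  exact zero_mem _

lemma lie_mem_stableSpan_of_normalizes {x : g} (hxu : ∀ y ∈ u, ⁅x, y⁆ ∈ u) {v : M} {c : R}
    (hv : ⁅x, v⁆ = c • v) {m : M} (hm : m ∈ stableSpan R u v) : ⁅x, m⁆ ∈ stableSpan R u v := by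
  set V := stableSpan R u v
  suffices V ≤ V ⊓ V.comap (toEnd R g M x) from (this hm).2
  refine stableSpan_le ⟨mem_stableSpan_self v, ?_⟩ fun y hy m ⟨hmV, hxm⟩ ↦
    ⟨lie_mem_stableSpan hy hmV, ?_⟩
  · change ⁅x, v⁆ ∈ V
    rw [hv]
    exact V.smul_mem c (mem_stableSpan_self v)
  · change ⁅x, m⁆ ∈ V at hxm
    change ⁅x, ⁅y, m⁆⁆ ∈ V
    rw [leibniz_lie]
    exact add_mem (lie_mem_stableSpan (hxu y hy) hmV) (lie_mem_stableSpan hy hxm)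

variable (g) in
/-- `[g, G]`. -/
def bracketSpan (G : Submodule R M) : Submodule R M :=
  Submodule.map₂ (toEnd R g M : g →ₗ[R] Module.End R M) ⊤ G

lemma lie_mem_bracketSpan (z : g) {G : Submodule R M} {m : M} (hm : m ∈ G) :
    ⁅z, m⁆ ∈ bracketSpan g G :=
  Submodule.apply_mem_map₂ _ Submodule.mem_top hm

lemma bracketSpan_le_iff {G Q : Submodule R M} :
    bracketSpan g G ≤ Q ↔ ∀ z : g, ∀ m ∈ G, ⁅z, m⁆ ∈ Q := by
  simp [bracketSpan, Submodule.map₂_le]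

lemma lie_mem_bracketSpan_of_stable {G : Submodule R M} (hG : ∀ x ∈ u, ∀ m ∈ G, ⁅x, m⁆ ∈ G)
    {x : g} (hx : x ∈ u) {m : M} (hm : m ∈ bracketSpan g G) : ⁅x, m⁆ ∈ bracketSpan g G := by
  suffices bracketSpan g G ≤ (bracketSpan g G).comap (toEnd R g M x) from this hm
  refine bracketSpan_le_iff.mpr fun z m hm ↦ ?_
  change ⁅x, ⁅z, m⁆⁆ ∈ bracketSpan g G
  rw [leibniz_lie]
  exact add_mem (lie_mem_bracketSpan _ hm) (lie_mem_bracketSpan z (hG x hx m hm))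

lemma stableSpan_lie_le (z : g) (p : M) :
    stableSpan R u ⁅z, p⁆ ≤ bracketSpan g (stableSpan R u p) :=
  stableSpan_le (lie_mem_bracketSpan z (mem_stableSpan_self p))
    fun _ hx _ ↦ lie_mem_bracketSpan_of_stable (fun _ hy _ ↦ lie_mem_stableSpan hy) hx

instance [Module.Finite R g] (G : Submodule R M) [Module.Finite R G] :
    Module.Finite R (bracketSpan g G) :=
  Module.Finite.iff_fg.mpr <|
    (Module.Finite.fg_top).map₂ _ (Module.Finite.iff_fg.mp inferInstance)

end StableSpan

section LocalFiniteness

variable {K g M : Type*} [Field K] [LieRing g] [LieAlgebra K g] [FiniteDimensional K g]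
  [AddCommGroup M] [Module K M] [LieRingModule g M] [LieModule K g M]

theorem finiteDimensional_stableSpan {u : Set g} {s : Set M}
    (hs : LieSubmodule.lieSpan K g s = ⊤) (hsu : ∀ x ∈ u, ∀ p ∈ s, ⁅x, p⁆ = 0) (v : M) :
    FiniteDimensional K (stableSpan K u v) := by
  let F : LieSubmodule K g M :=
    { carrier := {p | FiniteDimensional K (stableSpan K u p)}
      add_mem' := fun {p q} (_ : FiniteDimensional K _) (_ : FiniteDimensional K _) ↦
        Submodule.finiteDimensional_of_le (stableSpan_add_le p q)
      zero_mem' := Submodule.finiteDimensional_of_le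
        (stableSpan_le_span_singleton fun x _ ↦ lie_zero x)
      smul_mem' := fun c p (_ : FiniteDimensional K _) ↦
        Submodule.finiteDimensional_of_le (stableSpan_smul_le c p)
      lie_mem := fun {z p} (_ : FiniteDimensional K _) ↦
        Submodule.finiteDimensional_of_le (stableSpan_lie_le z p) }
  have hsF : ⊤ ≤ F := hs ▸ LieSubmodule.lieSpan_le.mpr fun p hp ↦
    Submodule.finiteDimensional_of_le (stableSpan_le_span_singleton fun x hx ↦ hsu x hx p hp)
  exact hsF (LieSubmodule.mem_top v)

end LocalFiniteness

lemma LieModule.lie_lie_eq_zero_of_mem_weightSpace {R L M : Type*} [CommRing R] [LieRing L]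
    [LieAlgebra R L] [AddCommGroup M] [Module R M] [LieRingModule L M] [LieModule R L M]
    {χ : L → R} {m : M} (hm : m ∈ weightSpace M χ) (x y : L) : ⁅⁅x, y⁆, m⁆ = 0 := by
  rw [mem_weightSpace] at hm
  rw [lie_lie, hm, hm, lie_smul, lie_smul, hm, hm, smul_smul, smul_smul, mul_comm, sub_self]

lemma LieModule.lowerCentralSeries_one_eq_top_of_genWeightSpace_zero_eq_bot
    {R L M : Type*} [CommRing R] [LieRing L] [LieAlgebra R L] [LieRing.IsNilpotent L]
    [AddCommGroup M] [Module R M] [LieRingModule L M] [LieModule R L M]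
    [IsNoetherian R M] [IsArtinian R M] (h0 : genWeightSpace M (0 : L → R) = ⊥) :
    lowerCentralSeries R L M 1 = ⊤ := by
  have hcompl := isCompl_genWeightSpace_zero_posFittingComp R L M
  rw [h0] at hcompl
  have hpos : posFittingComp R L M = ⊤ := by simpa using hcompl.sup_eq_top
  exact top_le_iff.mp <| hpos ▸
    (posFittingComp_le_iInf_lowerCentralSeries R L M).trans (iInf_le _ 1)

namespace LieSubalgebra

variable {K g : Type*} [Field K] [LieRing g] [LieAlgebra K g] [FiniteDimensional K g]

/-- `h` has no zero weight on `u`, so by the Fitting decomposition `u = [h, u]`. -/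
lemma toSubmodule_le_span_lie_of_isCartanSubalgebra (h u : LieSubalgebra K g)
    [h.IsCartanSubalgebra] (hhu : ∀ x ∈ h, ∀ y ∈ u, ⁅x, y⁆ ∈ u)
    (hdisj : Disjoint h.toSubmodule u.toSubmodule) :
    u.toSubmodule ≤ Submodule.span K {z | ∃ x ∈ h, ∃ y ∈ u, ⁅x, y⁆ = z} := by
  let U : LieSubmodule K h g := { u.toSubmodule with lie_mem := fun {x _} hm ↦ hhu x x.2 _ hm }
  have h0 : genWeightSpace U (0 : h → K) = ⊥ := by
    refine (LieSubmodule.eq_bot_iff _).mpr fun w hw ↦ Subtype.ext ?_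
    have hwh : (w : g) ∈ zeroRootSubalgebra K g h :=
      map_genWeightSpace_le U.incl (LieSubmodule.mem_map_of_mem hw)
    rw [zeroRootSubalgebra_eq_of_is_cartan] at hwh
    exact Submodule.disjoint_def.mp hdisj _ hwh w.2
  intro y hy
  have hyU : (⟨y, hy⟩ : U) ∈ lowerCentralSeries K h U 1 :=
    (lowerCentralSeries_one_eq_top_of_genWeightSpace_zero_eq_bot h0).symm ▸
      LieSubmodule.mem_top _
  rw [LieModule.lowerCentralSeries_succ, lowerCentralSeries_zero, ← LieSubmodule.mem_toSubmodule,
    LieSubmodule.lieIdeal_oper_eq_linear_span] at hyU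
  change ((⟨y, hy⟩ : U) : g) ∈ _
  generalize (⟨y, hy⟩ : U) = w at hyU
  induction hyU using Submodule.span_induction with
  | mem _ hz =>
    obtain ⟨⟨x, -⟩, ⟨n, -⟩, rfl⟩ := hz
    exact Submodule.subset_span ⟨x, x.2, n, n.2, rfl⟩
  | zero => exact zero_mem _
  | add _ _ _ _ ha hb => exact add_mem ha hb
  | smul c _ _ ha => exact Submodule.smul_mem _ c ha

variable {R L : Type*} [CommRing R] [LieRing L] [LieAlgebra R L]
  {h u : LieSubalgebra R L}

lemma lie_add_add_sub_lie_mem (hhu : ∀ x ∈ h, ∀ y ∈ u, ⁅x, y⁆ ∈ u) {a b c d : L}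
    (ha : a ∈ h) (hb : b ∈ u) (hc : c ∈ h) (hd : d ∈ u) : ⁅a + b, c + d⁆ - ⁅a, c⁆ ∈ u := by
  have : ⁅a + b, c + d⁆ - ⁅a, c⁆ = ⁅a, d⁆ + -⁅c, b⁆ + ⁅b, d⁆ := by
    rw [add_lie, lie_add, lie_add, ← lie_skew c b]
    abel
  rw [this]
  exact add_mem (add_mem (hhu a ha d hd) (neg_mem (hhu c hc b hb))) (u.lie_mem hb hd)

variable (h u) in
def supOfNormalizes (hhu : ∀ x ∈ h, ∀ y ∈ u, ⁅x, y⁆ ∈ u) : LieSubalgebra R L :=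
  { h.toSubmodule ⊔ u.toSubmodule with
    lie_mem' := by
      intro x y hx hy
      obtain ⟨a, ha, b, hb, rfl⟩ := Submodule.mem_sup.mp hx
      obtain ⟨c, hc, d, hd, rfl⟩ := Submodule.mem_sup.mp hy
      rw [← add_sub_cancel ⁅a, c⁆ ⁅a + b, c + d⁆]
      exact Submodule.add_mem_sup (h.lie_mem ha hc) (lie_add_add_sub_lie_mem hhu ha hb hc hd) }

variable {hhu : ∀ x ∈ h, ∀ y ∈ u, ⁅x, y⁆ ∈ u}

/-- `u` is an ideal of `h ⊕ u` containing its derived algebra. -/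
instance isSolvable_supOfNormalizes [IsLieAbelian h] [IsSolvable u] :
    IsSolvable (supOfNormalizes h u hhu) := by
  set s := supOfNormalizes h u hhu
  let I : LieIdeal R s :=
    { carrier := {x | (x : L) ∈ u}
      add_mem' := fun hx hy ↦ u.add_mem hx hy
      zero_mem' := u.zero_mem
      smul_mem' := fun c _ hx ↦ u.smul_mem c hx
      lie_mem := by
        rintro ⟨-, hz⟩ ⟨x, -⟩ (hx : x ∈ u)
        obtain ⟨a, ha, b, hb, rfl⟩ := Submodule.mem_sup.mp hz
        change ⁅a + b, x⁆ ∈ u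
        rw [add_lie]
        exact add_mem (hhu a ha x hx) (u.lie_mem hb hx) }
  let incl : I →ₗ⁅R⁆ u :=
    { toFun := fun x ↦ ⟨x.1, x.2⟩
      map_add' := fun _ _ ↦ rfl
      map_smul' := fun _ _ ↦ rfl
      map_lie' := rfl }
  have : IsSolvable I := Function.Injective.lieAlgebra_isSolvable (f := incl)
    fun x y hxy ↦ Subtype.ext (Subtype.ext (congrArg (fun z : u ↦ (z : L)) hxy :))
  have hder : derivedSeries R s 1 ≤ I := by
    rw [derivedSeries_def, derivedSeriesOfIdeal_succ, derivedSeriesOfIdeal_zero,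
      LieSubmodule.lie_le_iff]
    rintro ⟨-, hx⟩ - ⟨-, hy⟩ -
    obtain ⟨a, ha, b, hb, rfl⟩ := Submodule.mem_sup.mp hx
    obtain ⟨c, hc, d, hd, rfl⟩ := Submodule.mem_sup.mp hy
    have hac : ⁅a, c⁆ = 0 := congrArg Subtype.val (trivial_lie_zero h h ⟨a, ha⟩ ⟨c, hc⟩)
    have hmem := lie_add_add_sub_lie_mem hhu ha hb hc hd
    rwa [hac, sub_zero] at hmem
  obtain ⟨k, hk⟩ := IsSolvable.solvable R I
  refine IsSolvable.mk (R := R) (k := k + 1) (le_bot_iff.mp ?_)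
  rw [derivedSeries_def, derivedSeriesOfIdeal_add, ← (LieIdeal.derivedSeries_eq_bot_iff I k).mp hk]
  exact derivedSeriesOfIdeal_mono hder k

end LieSubalgebra

section LieTheorem

variable {K g M : Type*} [Field K] [CharZero K] [IsAlgClosed K] [LieRing g] [LieAlgebra K g]
  [AddCommGroup M] [Module K M] [LieRingModule g M] [LieModule K g M]

/-- Lie's theorem for `h ⊕ u` gives a common eigenvector, whose weight vanishes on `[h, u] ⊇ u`. -/
theorem exists_ne_zero_forall_lie_eq_zero {h u : LieSubalgebra K g} [IsLieAbelian h]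
    [IsSolvable u] (hhu : ∀ x ∈ h, ∀ y ∈ u, ⁅x, y⁆ ∈ u)
    (hu : u.toSubmodule ≤ Submodule.span K {z | ∃ x ∈ h, ∃ y ∈ u, ⁅x, y⁆ = z})
    {V : Submodule K M} [FiniteDimensional K V] (hV : V ≠ ⊥)
    (hVh : ∀ x ∈ h, ∀ m ∈ V, ⁅x, m⁆ ∈ V) (hVu : ∀ x ∈ u, ∀ m ∈ V, ⁅x, m⁆ ∈ V) :
    ∃ m ∈ V, m ≠ 0 ∧ ∀ y ∈ u, ⁅y, m⁆ = 0 := by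
  set s := LieSubalgebra.supOfNormalizes h u hhu
  let V' : LieSubmodule K s M :=
    { V with
      lie_mem := by
        rintro ⟨-, hz⟩ m hm
        obtain ⟨a, ha, b, hb, rfl⟩ := Submodule.mem_sup.mp hz
        change ⁅a + b, m⁆ ∈ V
        rw [add_lie]
        exact add_mem (hVh a ha m hm) (hVu b hb m hm) }
  have : Nontrivial V' := Submodule.nontrivial_iff_ne_bot.mpr hV
  have : FiniteDimensional K V' := ‹FiniteDimensional K V›
  obtain ⟨χ, _⟩ := exists_nontrivial_weightSpace_of_isSolvable K s V'
  obtain ⟨⟨m, hm⟩, hm0⟩ := exists_ne (0 : weightSpace V' χ)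
  refine ⟨m, m.2, fun h0 ↦ hm0 (by ext; exact h0), fun y hy ↦ ?_⟩
  suffices u.toSubmodule ≤ LinearMap.ker ((toEnd K g M : g →ₗ[K] Module.End K M).flip m) from
    this hy
  refine hu.trans (Submodule.span_le.mpr ?_)
  rintro _ ⟨x, hx, y, hy, rfl⟩
  have hxs : x ∈ s := Submodule.mem_sup_left hx
  have hys : y ∈ s := Submodule.mem_sup_right hy
  exact congrArg Subtype.val (lie_lie_eq_zero_of_mem_weightSpace hm ⟨x, hxs⟩ ⟨y, hys⟩)

end LieTheorem

namespace ParabolicDecomp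

variable {g : Type*} [LieRing g] [LieAlgebra ℂ g] (D : ParabolicDecomp g)
  (M : Type*) [AddCommGroup M] [Module ℂ M] [LieRingModule g M]

/-- `u⁻ · M`. -/
def uminusSpan : Submodule ℂ M :=
  Submodule.span ℂ {m : M | ∃ x ∈ D.uminus, ∃ w : M, m = ⁅x, w⁆}

variable {D M}

lemma lie_mem_uminusSpan {x : g} (hx : x ∈ D.uminus) (w : M) : ⁅x, w⁆ ∈ D.uminusSpan M :=
  Submodule.subset_span ⟨x, hx, w, rfl⟩

variable [LieModule ℂ g M]

lemma lie_mem_uminusSpan_of_mem_l {y : g} (hy : y ∈ D.l) {p : M} (hp : p ∈ D.uminusSpan M) :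
    ⁅y, p⁆ ∈ D.uminusSpan M := by
  suffices D.uminusSpan M ≤ (D.uminusSpan M).comap (toEnd ℂ g M y) from this hp
  refine Submodule.span_le.mpr ?_
  rintro _ ⟨x, hx, w, rfl⟩
  change ⁅y, ⁅x, w⁆⁆ ∈ D.uminusSpan M
  rw [leibniz_lie]
  exact add_mem (lie_mem_uminusSpan (D.lum y hy x hx) w) (lie_mem_uminusSpan hx _)

lemma bracketSpan_le_uminusSpan {G : Submodule ℂ M} (hGW : G ≤ D.uminusSpan M)
    (hG : ∀ x ∈ D.u, ∀ m ∈ G, ⁅x, m⁆ ∈ G) : bracketSpan g G ≤ D.uminusSpan M := by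
  refine bracketSpan_le_iff.mpr fun z m hm ↦ ?_
  have hz : z ∈ D.l.toSubmodule ⊔ D.u.toSubmodule ⊔ D.uminus.toSubmodule :=
    D.sup_top ▸ Submodule.mem_top
  obtain ⟨_, hlu, c, hc, rfl⟩ := Submodule.mem_sup.mp hz
  obtain ⟨a, ha, b, hb, rfl⟩ := Submodule.mem_sup.mp hlu
  rw [add_lie, add_lie]
  exact add_mem (add_mem (lie_mem_uminusSpan_of_mem_l ha (hGW hm)) (hGW (hG b hb m hm)))
    (lie_mem_uminusSpan hc m)

end ParabolicDecomp

namespace AlmostSimpleInduction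

variable {g : Type*} [LieRing g] [LieAlgebra ℂ g] {D : ParabolicDecomp g}
  {N : Type*} [AddCommGroup N] [Module ℂ N] [LieRingModule D.l N] [LieModule ℂ D.l N]
  {M : Type*} [AddCommGroup M] [Module ℂ M] [LieRingModule g M] [LieModule ℂ g M]

/-- The vectors `p` with `U(u) · p ⊆ u⁻ · M` form a `g`-submodule, which misses `j(N)`. -/
lemma eq_zero_of_mem_uminusSpan (asi : AlmostSimpleInduction D N M) {m : M}
    (hmW : m ∈ D.uminusSpan M) (hmu : ∀ x ∈ D.u, ⁅x, m⁆ = 0) : m = 0 := by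
  let Q : LieSubmodule ℂ g M :=
    { carrier := {p | stableSpan ℂ (D.u : Set g) p ≤ D.uminusSpan M}
      add_mem' := fun {p q} hp hq ↦ (stableSpan_add_le p q).trans (sup_le hp hq)
      zero_mem' := (stableSpan_le_span_singleton fun x _ ↦ lie_zero x).trans (by simp)
      smul_mem' := fun c p hp ↦ (stableSpan_smul_le c p).trans hp
      lie_mem := fun {z p} hp ↦ (stableSpan_lie_le z p).trans <|
        ParabolicDecomp.bracketSpan_le_uminusSpan hp fun _ hx _ ↦ lie_mem_stableSpan hx }
  by_contra hm
  have hmQ : m ∈ Q := (stableSpan_le_span_singleton hmu).trans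
    ((Submodule.span_singleton_le_iff_mem m _).mpr hmW)
  obtain ⟨n, hn, hnQ⟩ := asi.almost_simple Q fun hQ ↦ hm (by simpa [hQ] using hmQ)
  exact hn <| Submodule.disjoint_def.mp asi.pbw_compl.disjoint _ ⟨n, rfl⟩
    (hnQ (mem_stableSpan_self _))

lemma uInvariants_le_range (asi : AlmostSimpleInduction D N M) :
    uInvariants D M ≤ LinearMap.range asi.j := by
  intro m hm
  obtain ⟨_, ⟨n, rfl⟩, w, hw, rfl⟩ := Submodule.mem_sup.mp (asi.pbw_compl.sup_eq_top ▸
    Submodule.mem_top (x := m))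
  have hwu : ∀ x ∈ D.u, ⁅x, w⁆ = 0 := fun x hx ↦ by
    simpa [asi.u_annihilates x hx n] using hm x hx
  rw [asi.eq_zero_of_mem_uminusSpan hw hwu, add_zero]
  exact ⟨n, rfl⟩

end AlmostSimpleInduction

theorem uOrbit_meets_canonical_copy_general
    (g : Type*) [LieRing g] [LieAlgebra ℂ g] [FiniteDimensional ℂ g]
    [LieAlgebra.IsSemisimple ℂ g]
    (D : ParabolicDecomp g)
    (h : LieSubalgebra ℂ g) [h.IsCartanSubalgebra] (hhl : h ≤ D.l)
    (C : Type*) [AddCommGroup C] [Module ℂ C] [LieRingModule D.l C] [LieModule ℂ D.l C]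
    (P : Type*) [AddCommGroup P] [Module ℂ P] [LieRingModule g P] [LieModule ℂ g P]
    (asi : AlmostSimpleInduction D C P)
    (v : P) (hv : v ≠ 0)
    (hwt : ∃ μ : g → ℂ, ∀ x ∈ h, ⁅x, v⁆ = μ x • v) :
    ∃ w : P, w ≠ 0 ∧ w ∈ LinearMap.range asi.j ∧
      w ∈ sInf {Q : Submodule ℂ P | v ∈ Q ∧ ∀ x ∈ D.u, ∀ m ∈ Q, ⁅x, m⁆ ∈ Q} := by
  obtain ⟨μ, hμ⟩ := hwt
  have := D.u_nilpotent
  have hhu : ∀ x ∈ h, ∀ y ∈ D.u, ⁅x, y⁆ ∈ D.u := fun x hx ↦ D.lu x (hhl hx)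
  have : FiniteDimensional ℂ (stableSpan ℂ (D.u : Set g) v) :=
    finiteDimensional_stableSpan asi.generates
      (by rintro x hx _ ⟨n, rfl⟩; exact asi.u_annihilates x hx n) v
  obtain ⟨m, hmV, hm0, hmu⟩ := exists_ne_zero_forall_lie_eq_zero hhu
    (h.toSubmodule_le_span_lie_of_isCartanSubalgebra D.u hhu (D.disj_lu.mono_left hhl))
    ((Submodule.ne_bot_iff _).mpr ⟨v, mem_stableSpan_self v, hv⟩)
    (fun x hx _ ↦ lie_mem_stableSpan_of_normalizes (hhu x hx) (hμ x hx))
    (fun _ hx _ ↦ lie_mem_stableSpan hx)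
  exact ⟨m, hm0, asi.uInvariants_le_range hmu, hmV⟩

/-- Let `C` be a weight `l`-module with support a single coset of `h_s^*` and
`P = Ind_p(C)` the associated almost-simple quotient of the parabolic induction.  If `v` is a
non-zero weight vector of `P`, then `(U(u)·v) ∩ (1 ⊗ C) ≠ 0`, where `U(u)·v` is the smallest
subspace of `P` containing `v` and stable under the action of `u`, and `1 ⊗ C` is the
canonical copy of `C` in `P`. -/
theorem uOrbit_meets_canonical_copy
    (g : Type*) [LieRing g] [LieAlgebra ℂ g] [FiniteDimensional ℂ g]
    [LieAlgebra.IsSemisimple ℂ g]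
    (D : ParabolicDecomp g)
    (h : LieSubalgebra ℂ g) [h.IsCartanSubalgebra] (hhl : h ≤ D.l)
    (C : Type*) [AddCommGroup C] [Module ℂ C] [LieRingModule D.l C] [LieModule ℂ D.l C]
    (P : Type*) [AddCommGroup P] [Module ℂ P] [LieRingModule g P] [LieModule ℂ g P]
    (asi : AlmostSimpleInduction D C P)
    (hCweight : Submodule.span ℂ {v : C | ∃ χ : g → ℂ, ∀ (x : g) (hx : x ∈ h),
      ⁅(⟨x, hhl hx⟩ : D.l), v⁆ = χ x • v} = ⊤)
    (ζ : g → ℂ)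
    (hsupp : ∀ μ : g → ℂ, lWeightSpace D h hhl C μ ≠ ⊥ →
      ∀ x ∈ h, (∀ y ∈ D.l, ⁅x, y⁆ = 0) → μ x = ζ x)
    (v : P) (hv : v ≠ 0)
    (hwt : ∃ μ : g → ℂ, ∀ x ∈ h, ⁅x, v⁆ = μ x • v) :
    ∃ w : P, w ≠ 0 ∧ w ∈ LinearMap.range asi.j ∧
      w ∈ sInf {Q : Submodule ℂ P | v ∈ Q ∧ ∀ x ∈ D.u, ∀ m ∈ Q, ⁅x, m⁆ ∈ Q} :=
  uOrbit_meets_canonical_copy_general g D h hhl C P asi v hv hwt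
end

section
/- With D_{λ;0} the sl2-module induced from the one-dimensional C[h,Ω]-module with h-eigenvalue λ and Casimir eigenvalue 0: if v ∈ D_{λ;0} is a non-zero vector with e·v = 0, then the h-eigenvalue of v lies in {0, −2, 2}. Consequently, D_{λ;0} is a simple sl2-module whenever λ ∉ 2Z. -/
/-- The `μ`-eigenspace of the action of an element `H` of a Lie algebra on a module. -/
def hEigenspace {g : Type} [LieRing g] [LieAlgebra ℂ g] (H : g)
    (M : Type) [AddCommGroup M] [Module ℂ M] [LieRingModule g M] [LieModule ℂ g M]
    (μ : ℂ) : Submodule ℂ M where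
  carrier := {m : M | ⁅H, m⁆ = μ • m}
  add_mem' := by
    intro a b ha hb
    simp only [Set.mem_setOf_eq] at *
    rw [lie_add, ha, hb, smul_add]
  zero_mem' := by simp
  smul_mem' := by
    intro c a ha
    simp only [Set.mem_setOf_eq] at *
    rw [lie_smul, ha, smul_comm]

/-!
The Casimir `Ω = EF + FE + H²/2` commutes with `H`, `E`, `F`, hence with all of `g`, so its kernel
is a Lie submodule; it contains the generator `v`, so `Ω = 0` on `M`. On an `H`-eigenvector of
weight `μ` this says that `FE` acts by `-μ(μ+2)/4`, so a nonzero `w` with `E·w = 0` has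
`μ ∈ {0, -2}`.

The ladder `Eᵏ v`, `Fᵏ v` (weights `λ + 2k`, `λ - 2k`) spans all of `M`: its span is stable under
`E` and `F` because `FE` and `EF` act on weight vectors by scalars. A nonzero Lie submodule is
`H`-stable, so it contains one of these vectors, their weights being distinct. For `λ ∉ 2ℤ` the
scalars `-μ(μ ± 2)/4` never vanish along the ladder, so `F` (resp. `E`) carries that vector back
to a nonzero multiple of `v`, and the submodule is everything. The triple `(-H, F, E)` has the
same Casimir and reverses the ladder, which reduces the `F`-side to the `E`-side.
-/

open LieModule

theorem Submodule.mem_of_sum_mem_of_apply_eq_smul {K M ι : Type*} [Field K] [AddCommGroup M]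
    [Module K M] {f : Module.End K M} {p : Submodule K M} (hp : ∀ x ∈ p, f x ∈ p)
    {μ : ι → K} (hμ : Function.Injective μ) {m : ι → M} (hm : ∀ i, f (m i) = μ i • m i)
    {s : Finset ι} (hs : ∑ i ∈ s, m i ∈ p) : ∀ i ∈ s, m i ∈ p := by
  classical
  induction s using Finset.induction_on generalizing m with
  | empty => simp
  | @insert j s hj ih =>
    -- `f - μ j` kills the `j`-th summand and rescales the others by nonzero factors.
    have hshift : f (∑ i ∈ insert j s, m i) - μ j • ∑ i ∈ insert j s, m i =
        ∑ i ∈ s, (μ i - μ j) • m i := by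
      simp only [Finset.sum_insert hj, map_add, map_sum, hm, smul_add, Finset.smul_sum,
        sub_smul, Finset.sum_sub_distrib]
      abel
    have hscaled := ih (fun i ↦ by rw [map_smul, hm, smul_comm])
      (hshift ▸ sub_mem (hp _ hs) (p.smul_mem _ hs))
    have hrest : ∀ i ∈ s, m i ∈ p := fun i hi ↦
      (p.smul_mem_iff (sub_ne_zero.mpr (hμ.ne (by rintro rfl; exact hj hi)))).mp (hscaled i hi)
    rw [Finset.sum_insert hj] at hs
    rw [Finset.forall_mem_insert]
    exact ⟨(p.add_mem_iff_left (p.sum_mem hrest)).mp hs, hrest⟩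

section Module

variable {K g M : Type*} [Field K] [LieRing g] [LieAlgebra K g]
  [AddCommGroup M] [Module K M] [LieRingModule g M] [LieModule K g M] {H E F : g}

theorem Submodule.eq_top_of_mem_of_forall_lie_mem {s : Set g} (hs : Submodule.span K s = ⊤)
    {v : M} (hgen : LieSubmodule.lieSpan K g {v} = ⊤) {p : Submodule K M} (hv : v ∈ p)
    (hp : ∀ x ∈ s, ∀ m ∈ p, ⁅x, m⁆ ∈ p) : p = ⊤ := by
  have hlie : ∀ (x : g), ∀ m ∈ p, ⁅x, m⁆ ∈ p := by
    intro x
    have hx : x ∈ Submodule.span K s := hs ▸ Submodule.mem_top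
    induction hx using Submodule.span_induction with
    | mem x hx => exact hp x hx
    | zero => simp
    | add x y _ _ hx hy => intro m hm; rw [add_lie]; exact p.add_mem (hx m hm) (hy m hm)
    | smul c x _ hx => intro m hm; rw [smul_lie]; exact p.smul_mem c (hx m hm)
  obtain ⟨N, rfl⟩ := (p.exists_lieSubmodule_coe_eq_iff g).mpr hlie
  rw [LieSubmodule.toSubmodule_eq_top, eq_top_iff, ← hgen, LieSubmodule.lieSpan_le,
    Set.singleton_subset_iff]
  exact hv

variable (K M) in
def sl2Casimir (H E F : g) : Module.End K M :=
  toEnd K g M E * toEnd K g M F + toEnd K g M F * toEnd K g M E +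
    (2⁻¹ : K) • (toEnd K g M H * toEnd K g M H)

@[simp]
theorem sl2Casimir_apply (m : M) :
    sl2Casimir K M H E F m = ⁅E, ⁅F, m⁆⁆ + ⁅F, ⁅E, m⁆⁆ + (2⁻¹ : K) • ⁅H, ⁅H, m⁆⁆ :=
  rfl

theorem sl2Casimir_neg_swap : sl2Casimir K M (-H) F E = sl2Casimir K M H E F := by
  ext m
  simp only [sl2Casimir_apply, neg_lie, lie_neg, neg_neg]
  abel

theorem sl2Casimir_apply_lie [CharZero K] (hHE : ⁅H, E⁆ = (2 : K) • E)
    (hHF : ⁅H, F⁆ = (-2 : K) • F) (hEF : ⁅E, F⁆ = H) {x : g} (hx : x ∈ ({H, E, F} : Set g))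
    (m : M) : sl2Casimir K M H E F ⁅x, m⁆ = ⁅x, sl2Casimir K M H E F m⁆ := by
  have hEH : ⁅E, H⁆ = -((2 : K) • E) := by rw [← lie_skew, hHE]
  -- The three `leibniz_lie` rules put both sides into the PBW order `F`, `H`, `E`.
  rcases hx with hx | hx | hx <;> subst x <;>
  simp only [sl2Casimir_apply, lie_add, lie_smul, leibniz_lie E F, leibniz_lie E H,
    leibniz_lie H F, hEF, hEH, hHF, smul_lie, neg_lie, lie_neg, smul_add, smul_neg] <;>
  module

theorem sl2Casimir_eq_zero [CharZero K] (hHE : ⁅H, E⁆ = (2 : K) • E)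
    (hHF : ⁅H, F⁆ = (-2 : K) • F) (hEF : ⁅E, F⁆ = H) (hspan : Submodule.span K {H, E, F} = ⊤)
    {v : M} (hgen : LieSubmodule.lieSpan K g {v} = ⊤) (hv : sl2Casimir K M H E F v = 0) :
    sl2Casimir K M H E F = 0 := by
  rw [← LinearMap.ker_eq_top]
  refine Submodule.eq_top_of_mem_of_forall_lie_mem hspan hgen hv fun x hx m hm ↦ ?_
  rw [LinearMap.mem_ker] at hm ⊢
  rw [sl2Casimir_apply_lie hHE hHF hEF hx, hm, lie_zero]

theorem lie_h_lie_e_eq_smul {α μ : K} (hHE : ⁅H, E⁆ = α • E) {m : M} (hm : ⁅H, m⁆ = μ • m) :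
    ⁅H, ⁅E, m⁆⁆ = (μ + α) • ⁅E, m⁆ := by
  rw [leibniz_lie, hHE, smul_lie, hm, lie_smul]
  module

theorem lie_f_lie_e_eq_smul [CharZero K] (hEF : ⁅E, F⁆ = H) (hΩ : sl2Casimir K M H E F = 0)
    {m : M} {μ : K} (hm : ⁅H, m⁆ = μ • m) : ⁅F, ⁅E, m⁆⁆ = -(μ * (μ + 2) / 4) • m := by
  have h := LinearMap.congr_fun hΩ m
  rw [sl2Casimir_apply, LinearMap.zero_apply, leibniz_lie E F, hEF, hm, lie_smul, hm] at h
  linear_combination (norm := module) (2⁻¹ : K) • h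

theorem weight_eq_zero_or_eq_neg_two_of_lie_e_eq_zero [CharZero K] (hEF : ⁅E, F⁆ = H)
    (hΩ : sl2Casimir K M H E F = 0) {w : M} {μ : K} (hw : w ≠ 0) (hEw : ⁅E, w⁆ = 0)
    (hHw : ⁅H, w⁆ = μ • w) : μ = 0 ∨ μ = -2 := by
  have h := lie_f_lie_e_eq_smul hEF hΩ hHw
  rw [hEw, lie_zero, eq_comm, smul_eq_zero_iff_left hw, neg_eq_zero, div_eq_zero_iff,
    mul_eq_zero] at h
  rcases h with (h | h) | h
  · exact Or.inl h
  · exact Or.inr (eq_neg_of_add_eq_zero_left h)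
  · norm_num at h

variable {v : M}

def sl2Ladder (E F : g) (v : M) (k : ℤ) : M :=
  if 0 ≤ k then (fun m ↦ ⁅E, m⁆)^[k.toNat] v else (fun m ↦ ⁅F, m⁆)^[(-k).toNat] v

theorem sl2Ladder_natCast (n : ℕ) : sl2Ladder E F v n = (fun m ↦ ⁅E, m⁆)^[n] v := by
  simp [sl2Ladder]

theorem sl2Ladder_zero : sl2Ladder E F v 0 = v := by
  simp [sl2Ladder]

theorem sl2Ladder_neg (k : ℤ) : sl2Ladder F E v (-k) = sl2Ladder E F v k := by
  rcases lt_trichotomy k 0 with hk | rfl | hk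
  · simp [sl2Ladder, hk.le, hk.not_ge]
  · simp [sl2Ladder]
  · simp [sl2Ladder, hk.le, hk.not_ge]

theorem sl2Ladder_natCast_succ (n : ℕ) :
    sl2Ladder E F v (n + 1) = ⁅E, sl2Ladder E F v n⁆ := by
  rw [← Nat.cast_succ, sl2Ladder_natCast, sl2Ladder_natCast, Function.iterate_succ_apply']

theorem sl2Ladder_neg_natCast_succ (n : ℕ) :
    sl2Ladder E F v (-(n + 1)) = ⁅F, sl2Ladder E F v (-n)⁆ := by
  rw [sl2Ladder_neg, sl2Ladder_neg, sl2Ladder_natCast_succ]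

theorem range_sl2Ladder_swap : Set.range (sl2Ladder F E v) = Set.range (sl2Ladder E F v) := by
  rw [← neg_surjective.range_comp]
  exact congrArg Set.range (funext sl2Ladder_neg)

variable {lam : K}

theorem lie_h_sl2Ladder_natCast (hHE : ⁅H, E⁆ = (2 : K) • E) (hv : ⁅H, v⁆ = lam • v) (n : ℕ) :
    ⁅H, sl2Ladder E F v n⁆ = (lam + 2 * n) • sl2Ladder E F v n := by
  induction n with
  | zero => simpa [sl2Ladder_zero] using hv
  | succ n ih =>
    push_cast
    rw [sl2Ladder_natCast_succ, lie_h_lie_e_eq_smul hHE ih, add_assoc, mul_add_one]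

theorem lie_h_sl2Ladder (hHE : ⁅H, E⁆ = (2 : K) • E) (hHF : ⁅H, F⁆ = (-2 : K) • F)
    (hv : ⁅H, v⁆ = lam • v) (k : ℤ) :
    ⁅H, sl2Ladder E F v k⁆ = (lam + 2 * k) • sl2Ladder E F v k := by
  obtain ⟨n, rfl | rfl⟩ := Int.eq_nat_or_neg k
  · exact_mod_cast lie_h_sl2Ladder_natCast hHE hv n
  · have h := lie_h_sl2Ladder_natCast (H := -H) (E := F) (F := E) (v := v) (lam := -lam)
      (by rw [neg_lie, hHF, neg_smul, neg_neg]) (by rw [neg_lie, hv, neg_smul]) n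
    rw [neg_lie] at h
    rw [sl2Ladder_neg, ← neg_neg ⁅H, sl2Ladder F E v n⁆, h]
    push_cast
    module

theorem lie_f_sl2Ladder_natCast_succ [CharZero K] (hHE : ⁅H, E⁆ = (2 : K) • E)
    (hEF : ⁅E, F⁆ = H) (hΩ : sl2Casimir K M H E F = 0) (hv : ⁅H, v⁆ = lam • v) (n : ℕ) :
    ⁅F, sl2Ladder E F v (n + 1)⁆ =
      -((lam + 2 * n) * (lam + 2 * n + 2) / 4) • sl2Ladder E F v n := by
  rw [sl2Ladder_natCast_succ, lie_f_lie_e_eq_smul hEF hΩ (lie_h_sl2Ladder_natCast hHE hv n)]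

theorem lie_f_sl2Ladder_mem_span [CharZero K] (hHE : ⁅H, E⁆ = (2 : K) • E)
    (hEF : ⁅E, F⁆ = H) (hΩ : sl2Casimir K M H E F = 0) (hv : ⁅H, v⁆ = lam • v) (k : ℤ) :
    ⁅F, sl2Ladder E F v k⁆ ∈ Submodule.span K (Set.range (sl2Ladder E F v)) := by
  rcases le_or_gt k 0 with hk | hk
  · obtain ⟨n, rfl⟩ : ∃ n : ℕ, k = -n := ⟨k.natAbs, by omega⟩
    rw [← sl2Ladder_neg_natCast_succ]
    exact Submodule.subset_span ⟨_, rfl⟩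
  · obtain ⟨n, rfl⟩ : ∃ n : ℕ, k = n + 1 := ⟨k.toNat - 1, by omega⟩
    rw [lie_f_sl2Ladder_natCast_succ hHE hEF hΩ hv]
    exact Submodule.smul_mem _ _ (Submodule.subset_span ⟨_, rfl⟩)

theorem lie_e_sl2Ladder_mem_span [CharZero K] (hHF : ⁅H, F⁆ = (-2 : K) • F)
    (hEF : ⁅E, F⁆ = H) (hΩ : sl2Casimir K M H E F = 0) (hv : ⁅H, v⁆ = lam • v) (k : ℤ) :
    ⁅E, sl2Ladder E F v k⁆ ∈ Submodule.span K (Set.range (sl2Ladder E F v)) := by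
  rw [← range_sl2Ladder_swap, ← sl2Ladder_neg]
  exact lie_f_sl2Ladder_mem_span (H := -H) (by rw [neg_lie, hHF, neg_smul, neg_neg])
    (by rw [← lie_skew, hEF]) (by rw [sl2Casimir_neg_swap, hΩ]) (by rw [neg_lie, hv, neg_smul]) (-k)

theorem span_range_sl2Ladder_eq_top [CharZero K] (hHE : ⁅H, E⁆ = (2 : K) • E)
    (hHF : ⁅H, F⁆ = (-2 : K) • F) (hEF : ⁅E, F⁆ = H) (hspan : Submodule.span K {H, E, F} = ⊤)
    (hΩ : sl2Casimir K M H E F = 0) (hv : ⁅H, v⁆ = lam • v)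
    (hgen : LieSubmodule.lieSpan K g {v} = ⊤) :
    Submodule.span K (Set.range (sl2Ladder E F v)) = ⊤ := by
  set p := Submodule.span K (Set.range (sl2Ladder E F v))
  have hvp : v ∈ p := Submodule.subset_span ⟨0, sl2Ladder_zero⟩
  refine Submodule.eq_top_of_mem_of_forall_lie_mem hspan hgen hvp fun x hx m hm ↦ ?_
  suffices p ≤ p.comap (toEnd K g M x) from this hm
  rw [Submodule.span_le, Set.range_subset_iff]
  intro k
  rw [SetLike.mem_coe, Submodule.mem_comap, toEnd_apply_apply]
  rcases hx with hx | hx | hx <;> subst x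
  · rw [lie_h_sl2Ladder hHE hHF hv]
    exact p.smul_mem _ (Submodule.subset_span ⟨k, rfl⟩)
  · exact lie_e_sl2Ladder_mem_span hHF hEF hΩ hv k
  · exact lie_f_sl2Ladder_mem_span hHE hEF hΩ hv k

theorem mem_of_sl2Ladder_natCast_mem [CharZero K] (hHE : ⁅H, E⁆ = (2 : K) • E)
    (hEF : ⁅E, F⁆ = H) (hΩ : sl2Casimir K M H E F = 0) (hv : ⁅H, v⁆ = lam • v)
    (hlam : ∀ n : ℤ, lam ≠ 2 * n) {Q : LieSubmodule K g M} (n : ℕ)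
    (hn : sl2Ladder E F v n ∈ Q) : v ∈ Q := by
  induction n with
  | zero => simpa [sl2Ladder_zero] using hn
  | succ n ih =>
    have hc : (lam + 2 * n) * (lam + 2 * n + 2) ≠ 0 :=
      mul_ne_zero (fun h ↦ hlam (-n) (by push_cast; linear_combination h))
        (fun h ↦ hlam (-n - 1) (by push_cast; linear_combination h))
    have h := Q.lie_mem (x := F) hn
    rw [Nat.cast_succ, lie_f_sl2Ladder_natCast_succ hHE hEF hΩ hv] at h
    exact ih ((Q.toSubmodule.smul_mem_iff (neg_ne_zero.mpr (div_ne_zero hc (by norm_num)))).mp h)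

theorem mem_of_sl2Ladder_mem [CharZero K] (hHE : ⁅H, E⁆ = (2 : K) • E)
    (hHF : ⁅H, F⁆ = (-2 : K) • F) (hEF : ⁅E, F⁆ = H) (hΩ : sl2Casimir K M H E F = 0)
    (hv : ⁅H, v⁆ = lam • v) (hlam : ∀ n : ℤ, lam ≠ 2 * n) {Q : LieSubmodule K g M} (k : ℤ)
    (hk : sl2Ladder E F v k ∈ Q) : v ∈ Q := by
  obtain ⟨n, rfl | rfl⟩ := Int.eq_nat_or_neg k
  · exact mem_of_sl2Ladder_natCast_mem hHE hEF hΩ hv hlam n hk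
  · rw [← sl2Ladder_neg, neg_neg] at hk
    exact mem_of_sl2Ladder_natCast_mem (H := -H) (by rw [neg_lie, hHF, neg_smul, neg_neg])
      (by rw [← lie_skew, hEF]) (by rw [sl2Casimir_neg_swap, hΩ]) (by rw [neg_lie, hv, neg_smul])
      (fun n h ↦ hlam (-n) (by push_cast; linear_combination -h)) n hk

theorem LieSubmodule.eq_bot_or_eq_top_of_sl2Casimir_eq_zero [CharZero K]
    (hHE : ⁅H, E⁆ = (2 : K) • E) (hHF : ⁅H, F⁆ = (-2 : K) • F) (hEF : ⁅E, F⁆ = H)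
    (hspan : Submodule.span K {H, E, F} = ⊤) (hΩ : sl2Casimir K M H E F = 0)
    (hv : ⁅H, v⁆ = lam • v) (hgen : LieSubmodule.lieSpan K g {v} = ⊤)
    (hlam : ∀ n : ℤ, lam ≠ 2 * n) (Q : LieSubmodule K g M) : Q = ⊥ ∨ Q = ⊤ := by
  refine or_iff_not_imp_left.mpr fun hQ ↦ ?_
  obtain ⟨q, hqQ, hq⟩ := (Submodule.ne_bot_iff _).mp ((Q.toSubmodule_eq_bot).not.mpr hQ)
  have hq_span : q ∈ Submodule.span K (Set.range (sl2Ladder E F v)) := by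
    rw [span_range_sl2Ladder_eq_top hHE hHF hEF hspan hΩ hv hgen]
    exact Submodule.mem_top
  obtain ⟨c, rfl⟩ := Finsupp.mem_span_range_iff_exists_finsupp.mp hq_span
  have hweights : Function.Injective fun k : ℤ ↦ lam + 2 * (k : K) :=
    (add_right_injective lam).comp ((mul_right_injective₀ two_ne_zero).comp Int.cast_injective)
  have hcomp := Submodule.mem_of_sum_mem_of_apply_eq_smul (f := toEnd K g M H)
    (p := Q.toSubmodule) (fun m hm ↦ Q.lie_mem hm) hweights
    (m := fun k ↦ c k • sl2Ladder E F v k)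
    (fun k ↦ by rw [toEnd_apply_apply, lie_smul, lie_h_sl2Ladder hHE hHF hv, smul_comm]) hqQ
  obtain ⟨k, hk⟩ : c.support.Nonempty :=
    Finsupp.support_nonempty_iff.mpr (by rintro rfl; simp at hq)
  have hkQ := (Q.toSubmodule.smul_mem_iff (Finsupp.mem_support_iff.mp hk)).mp (hcomp k hk)
  rw [eq_top_iff, ← hgen, LieSubmodule.lieSpan_le, Set.singleton_subset_iff]
  exact mem_of_sl2Ladder_mem hHE hHF hEF hΩ hv hlam k hkQ

end Module

theorem induced_module_highest_weights_and_simplicity_general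
    (g : Type) [LieRing g] [LieAlgebra ℂ g]
    (H E F : g)
    (hHE : ⁅H, E⁆ = (2 : ℂ) • E) (hHF : ⁅H, F⁆ = (-2 : ℂ) • F) (hEF : ⁅E, F⁆ = H)
    (hspan : Submodule.span ℂ {H, E, F} = ⊤)
    (lam : ℂ)
    (M : Type) [AddCommGroup M] [Module ℂ M] [LieRingModule g M] [LieModule ℂ g M]
    (v : M) (hv : v ≠ 0)
    (hHv : ⁅H, v⁆ = lam • v)
    (hΩv : ⁅E, ⁅F, v⁆⁆ + ⁅F, ⁅E, v⁆⁆ + (2⁻¹ : ℂ) • ⁅H, ⁅H, v⁆⁆ = 0)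
    (hgen : LieSubmodule.lieSpan ℂ g {v} = ⊤) :
    (∀ (w : M) (μ : ℂ), w ≠ 0 → ⁅E, w⁆ = 0 → ⁅H, w⁆ = μ • w →
        μ ∈ ({0, -2, 2} : Set ℂ)) ∧
      ((¬ ∃ n : ℤ, lam = 2 * (n : ℂ)) →
        Nontrivial M ∧ ∀ Q : LieSubmodule ℂ g M, Q = ⊥ ∨ Q = ⊤) := by
  have hΩ : sl2Casimir ℂ M H E F = 0 := sl2Casimir_eq_zero hHE hHF hEF hspan hgen hΩv
  refine ⟨fun w μ hw hEw hHw ↦ ?_, fun hlam ↦ ⟨⟨v, 0, hv⟩, fun Q ↦ ?_⟩⟩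
  · rcases weight_eq_zero_or_eq_neg_two_of_lie_e_eq_zero hEF hΩ hw hEw hHw with rfl | rfl <;>
      simp
  · exact Q.eq_bot_or_eq_top_of_sl2Casimir_eq_zero hHE hHF hEF hspan hΩ hHv hgen
      (not_exists.mp hlam)

/-- Let `D_{λ;0}` be the `sl₂`-module induced from the one-dimensional `ℂ[H,Ω]`-module with
`H`-eigenvalue `λ` and Casimir eigenvalue `0` (characterised by its cyclic vector `v` and
the universal property of induction).  If `w ∈ D_{λ;0}` is a non-zero vector with
`E·w = 0` and `H`-eigenvalue `μ`, then `μ ∈ {0, −2, 2}`.  Consequently, `D_{λ;0}` is a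
simple `sl₂`-module whenever `λ ∉ 2ℤ`. -/
theorem induced_module_highest_weights_and_simplicity
    (g : Type) [LieRing g] [LieAlgebra ℂ g]
    (H E F : g)
    (hHE : ⁅H, E⁆ = (2 : ℂ) • E) (hHF : ⁅H, F⁆ = (-2 : ℂ) • F) (hEF : ⁅E, F⁆ = H)
    (hspan : Submodule.span ℂ {H, E, F} = ⊤)
    (lam : ℂ)
    (M : Type) [AddCommGroup M] [Module ℂ M] [LieRingModule g M] [LieModule ℂ g M]
    (v : M) (hv : v ≠ 0)
    (hHv : ⁅H, v⁆ = lam • v)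
    (hΩv : ⁅E, ⁅F, v⁆⁆ + ⁅F, ⁅E, v⁆⁆ + (2⁻¹ : ℂ) • ⁅H, ⁅H, v⁆⁆ = 0)
    (hgen : LieSubmodule.lieSpan ℂ g {v} = ⊤)
    (huniv : ∀ (M' : Type) [AddCommGroup M'] [Module ℂ M'] [LieRingModule g M']
      [LieModule ℂ g M'] (v' : M'),
      ⁅H, v'⁆ = lam • v' →
      ⁅E, ⁅F, v'⁆⁆ + ⁅F, ⁅E, v'⁆⁆ + (2⁻¹ : ℂ) • ⁅H, ⁅H, v'⁆⁆ = 0 →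
      ∃! φ : M →ₗ[ℂ] M', (∀ (x : g) (m : M), φ ⁅x, m⁆ = ⁅x, φ m⁆) ∧ φ v = v') :
    (∀ (w : M) (μ : ℂ), w ≠ 0 → ⁅E, w⁆ = 0 → ⁅H, w⁆ = μ • w →
        μ ∈ ({0, -2, 2} : Set ℂ)) ∧
      ((¬ ∃ n : ℤ, lam = 2 * (n : ℂ)) →
        Nontrivial M ∧ ∀ Q : LieSubmodule ℂ g M, Q = ⊥ ∨ Q = ⊤) :=
  induced_module_highest_weights_and_simplicity_general g H E F hHE hHF hEF hspan lam M v hv hHv hΩv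
    hgen
end

section
/- The sl2-module D = D_{2;0}, induced from the one-dimensional C[h,Ω]-module with h-eigenvalue 2 and Casimir eigenvalue 0, is not simple: it contains a highest-weight vector u of h-eigenvalue −2 and a highest-weight vector v of h-eigenvalue 0 satisfying e·u = 0, e·v = 0 and u = f·v, and f acts injectively on all of D. -/
universe u

open LieModule Finsupp

theorem IsSl2Triple.linearIndependent {K L : Type*} [Field K] [CharZero K] [LieRing L]
    [LieAlgebra K L] {h e f : L} (t : IsSl2Triple h e f) : LinearIndependent K ![h, e, f] := by
  refine Module.End.eigenvectors_linearIndependent' (toEnd K L L h) ![0, 2, -2] ?_ _ ?_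
  · intro i j hij
    fin_cases i <;> fin_cases j <;> first | rfl | norm_num at hij
  · intro i
    fin_cases i
    · exact ⟨by simp, t.h_ne_zero⟩
    · exact ⟨by simp [t.lie_h_e_smul K], t.e_ne_zero⟩
    · exact ⟨by simp [t.lie_lie_smul_f K], t.f_ne_zero⟩

section Span

variable {K g : Type*} [Field K] [LieRing g] [LieAlgebra K g] {H E F : g}

theorem forall_of_span_eq_top (hspan : Submodule.span K {H, E, F} = ⊤) {P : g → Prop}
    (hH : P H) (hE : P E) (hF : P F) (zero : P 0) (add : ∀ x y, P x → P y → P (x + y))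
    (smul : ∀ (c : K) x, P x → P (c • x)) (x : g) : P x := by
  have hx : x ∈ Submodule.span K {H, E, F} := hspan ▸ Submodule.mem_top
  induction hx using Submodule.span_induction with
  | mem y hy => rcases hy with rfl | rfl | rfl <;> assumption
  | zero => exact zero
  | add y z _ _ hy hz => exact add y z hy hz
  | smul c y _ hy => exact smul c y hy

theorem IsSl2Triple.exists_lieHom [CharZero K] (t : IsSl2Triple H E F)
    (hspan : Submodule.span K {H, E, F} = ⊤) {A : Type*} [LieRing A] [LieAlgebra K A]
    {h e f : A} (hhe : ⁅h, e⁆ = (2 : K) • e) (hhf : ⁅h, f⁆ = (-2 : K) • f) (hef : ⁅e, f⁆ = h) :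
    ∃ ρ : g →ₗ⁅K⁆ A, ρ H = h ∧ ρ E = e ∧ ρ F = f := by
  have hrange : Set.range ![H, E, F] = {H, E, F} := by
    ext x
    simp only [Matrix.range_cons, Matrix.range_empty, Set.union_empty, Set.mem_union,
      Set.mem_singleton_iff, Set.mem_insert_iff]
  let b := Module.Basis.mk t.linearIndependent (by rw [hrange, hspan])
  let ρ := b.constr K ![h, e, f]
  have hρ (i : Fin 3) : ρ (![H, E, F] i) = ![h, e, f] i := by
    simpa only [b, Module.Basis.mk_apply] using b.constr_basis K ![h, e, f] i
  have hρH : ρ H = h := hρ 0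
  have hρE : ρ E = e := hρ 1
  have hρF : ρ F = f := hρ 2
  have hHE := t.lie_h_e_smul K
  have hHF : ⁅H, F⁆ = (-2 : K) • F := by rw [t.lie_lie_smul_f K, neg_smul]
  -- both sides are bilinear, so it suffices to compare them on the nine pairs of generators
  have map_lie : ∀ x y, ρ ⁅x, y⁆ = ⁅ρ x, ρ y⁆ := by
    refine forall_of_span_eq_top (P := fun x => ∀ y, ρ ⁅x, y⁆ = ⁅ρ x, ρ y⁆) hspan ?_ ?_ ?_
      (by simp) (fun x y hx hy z => by simp [add_lie, hx, hy])
      (fun c x hx y => by simp [smul_lie, hx])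
    all_goals
      refine forall_of_span_eq_top hspan ?_ ?_ ?_ (by simp)
        (fun y z hy hz => by simp [lie_add, hy, hz]) (fun c y hy => by simp [lie_smul, hy])
      all_goals simp [hρH, hρE, hρF, hHE, hHF, t.lie_e_f, hhe, hhf, hef, ← lie_skew E H,
        ← lie_skew F H, ← lie_skew F E, ← lie_skew e h, ← lie_skew f h, ← lie_skew f e]
  exact ⟨{ ρ with map_lie' := map_lie _ _ }, hρH, hρE, hρF⟩

variable {M N : Type*} [AddCommGroup M] [Module K M] [LieRingModule g M] [LieModule K g M]
  [AddCommGroup N] [Module K N] [LieRingModule g N] [LieModule K g N]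

theorem LinearMap.map_lie_of_span_eq_top (hspan : Submodule.span K {H, E, F} = ⊤)
    (ψ : M →ₗ[K] N) (hH : ∀ m, ψ ⁅H, m⁆ = ⁅H, ψ m⁆) (hE : ∀ m, ψ ⁅E, m⁆ = ⁅E, ψ m⁆)
    (hF : ∀ m, ψ ⁅F, m⁆ = ⁅F, ψ m⁆) (x : g) (m : M) : ψ ⁅x, m⁆ = ⁅x, ψ m⁆ := by
  revert m
  refine forall_of_span_eq_top (P := fun x => ∀ m, ψ ⁅x, m⁆ = ⁅x, ψ m⁆) hspan hH hE hF
    (by simp) ?_ ?_ x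
  · intro x y hx hy m
    rw [add_lie, map_add, hx, hy, add_lie]
  · intro c x hx m
    rw [smul_lie, map_smul, hx, smul_lie]

def Submodule.toLieSubmoduleOfSpan (hspan : Submodule.span K {H, E, F} = ⊤)
    (P : Submodule K M) (hH : ∀ m ∈ P, ⁅H, m⁆ ∈ P) (hE : ∀ m ∈ P, ⁅E, m⁆ ∈ P)
    (hF : ∀ m ∈ P, ⁅F, m⁆ ∈ P) : LieSubmodule K g M where
  __ := P
  lie_mem {x m} := by
    refine forall_of_span_eq_top (P := fun x => ∀ m ∈ P, ⁅x, m⁆ ∈ P) hspan hH hE hF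
      (by simp) ?_ ?_ x m
    · intro x y hx hy m hm
      rw [add_lie]
      exact P.add_mem (hx m hm) (hy m hm)
    · intro c x hx m hm
      rw [smul_lie]
      exact P.smul_mem c (hx m hm)

end Span

section Casimir

variable {K g M : Type*} [Field K] [LieRing g] [LieAlgebra K g] [AddCommGroup M] [Module K M]
  [LieRingModule g M] [LieModule K g M] {H E F : g}

variable (K H E F) in
def casimir : Module.End K M :=
  toEnd K g M E * toEnd K g M F + toEnd K g M F * toEnd K g M E +
    (2⁻¹ : K) • (toEnd K g M H * toEnd K g M H)

theorem casimir_apply (m : M) :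
    casimir K H E F m = ⁅E, ⁅F, m⁆⁆ + ⁅F, ⁅E, m⁆⁆ + (2⁻¹ : K) • ⁅H, ⁅H, m⁆⁆ := rfl

theorem lie_e_lie_f_swap (hEF : ⁅E, F⁆ = H) (m : M) : ⁅E, ⁅F, m⁆⁆ = ⁅F, ⁅E, m⁆⁆ + ⁅H, m⁆ := by
  rw [leibniz_lie, hEF]; abel

theorem lie_e_lie_h_swap (hHE : ⁅H, E⁆ = (2 : K) • E) (m : M) :
    ⁅E, ⁅H, m⁆⁆ = ⁅H, ⁅E, m⁆⁆ - (2 : K) • ⁅E, m⁆ := by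
  rw [leibniz_lie H E m, hHE, smul_lie]; abel

theorem lie_h_lie_f_swap (hHF : ⁅H, F⁆ = (-2 : K) • F) (m : M) :
    ⁅H, ⁅F, m⁆⁆ = ⁅F, ⁅H, m⁆⁆ - (2 : K) • ⁅F, m⁆ := by
  rw [leibniz_lie H F m, hHF, smul_lie]; module

theorem lie_h_lie_e {μ : K} (hHE : ⁅H, E⁆ = (2 : K) • E) {m : M} (hm : ⁅H, m⁆ = μ • m) :
    ⁅H, ⁅E, m⁆⁆ = (μ + 2) • ⁅E, m⁆ := by
  rw [leibniz_lie, hHE, hm, smul_lie, lie_smul]; module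

theorem lie_h_lie_f {μ : K} (hHF : ⁅H, F⁆ = (-2 : K) • F) {m : M} (hm : ⁅H, m⁆ = μ • m) :
    ⁅H, ⁅F, m⁆⁆ = (μ - 2) • ⁅F, m⁆ := by
  rw [lie_h_lie_f_swap hHF, hm, lie_smul]; module

theorem casimir_lie_e [CharZero K] (hHE : ⁅H, E⁆ = (2 : K) • E) (hEF : ⁅E, F⁆ = H) (m : M) :
    casimir K H E F ⁅E, m⁆ = ⁅E, casimir K H E F m⁆ := by
  simp only [casimir_apply, lie_add, lie_smul, lie_sub, lie_e_lie_f_swap hEF,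
    lie_e_lie_h_swap hHE]
  module

theorem casimir_lie_f [CharZero K] (hHF : ⁅H, F⁆ = (-2 : K) • F) (hEF : ⁅E, F⁆ = H) (m : M) :
    casimir K H E F ⁅F, m⁆ = ⁅F, casimir K H E F m⁆ := by
  simp only [casimir_apply, lie_add, lie_smul, lie_sub, lie_e_lie_f_swap hEF,
    lie_h_lie_f_swap hHF]
  module

/-- The structure constant of `E` in `D_{l;q}`: since `Ω = 2FE + H + H²/2`, the product `FE`
acts by this scalar on a vector of weight `l + 2n` and Casimir eigenvalue `q`. -/
def eCoeff (l q : K) (n : ℤ) : K := (q - (l + 2 * n) - (l + 2 * n) ^ 2 / 2) / 2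

theorem lie_f_lie_e_of_casimir [CharZero K] (hEF : ⁅E, F⁆ = H) {l q : K} {n : ℤ} {m : M}
    (hm : ⁅H, m⁆ = (l + 2 * n) • m) (hc : casimir K H E F m = q • m) :
    ⁅F, ⁅E, m⁆⁆ = eCoeff l q n • m := by
  rw [casimir_apply, lie_e_lie_f_swap hEF, hm, lie_smul, hm] at hc
  rw [eCoeff]
  linear_combination (norm := module) (2⁻¹ : K) • hc

theorem lie_e_lie_f_of_casimir [CharZero K] (hEF : ⁅E, F⁆ = H) {l q : K} {n : ℤ} {m : M}
    (hm : ⁅H, m⁆ = (l + 2 * n) • m) (hc : casimir K H E F m = q • m) :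
    ⁅E, ⁅F, m⁆⁆ = eCoeff l q (n - 1) • m := by
  rw [lie_e_lie_f_swap hEF, lie_f_lie_e_of_casimir hEF hm hc, hm, ← add_smul, eCoeff, eCoeff]
  congr 1
  push_cast
  ring

end Casimir

section ChainVec

variable {K g M : Type*} [Field K] [LieRing g] [AddCommGroup M] [Module K M] [LieRingModule g M]

def raiseVec (E : g) (l q : K) (v₀ : M) : ℕ → M
  | 0 => v₀
  | k + 1 => (eCoeff l q k)⁻¹ • ⁅E, raiseVec E l q v₀ k⁆

def lowerVec (F : g) (v₀ : M) : ℕ → M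
  | 0 => v₀
  | k + 1 => ⁅F, lowerVec F v₀ k⁆

def chainVec (E F : g) (l q : K) (v₀ : M) : ℤ → M
  | (k : ℕ) => raiseVec E l q v₀ k
  | .negSucc k => lowerVec F v₀ (k + 1)

variable {E F : g} {l q : K} {v₀ : M}

theorem chainVec_zero : chainVec E F l q v₀ 0 = v₀ := rfl

theorem chainVec_natCast (k : ℕ) : chainVec E F l q v₀ k = raiseVec E l q v₀ k := rfl

theorem chainVec_neg_natCast (k : ℕ) : chainVec E F l q v₀ (-k) = lowerVec F v₀ k := by
  cases k with
  | zero => rfl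
  | succ k => rfl

end ChainVec

section Chain

variable {K g M : Type*} [Field K] [CharZero K] [LieRing g] [LieAlgebra K g] [AddCommGroup M]
  [Module K M] [LieRingModule g M] [LieModule K g M] {H E F : g} {l q : K} {v₀ : M}

theorem raiseVec_eigen (hHE : ⁅H, E⁆ = (2 : K) • E) (hEF : ⁅E, F⁆ = H) (hv : ⁅H, v₀⁆ = l • v₀)
    (hc : casimir K H E F v₀ = q • v₀) (k : ℕ) :
    ⁅H, raiseVec E l q v₀ k⁆ = (l + 2 * k) • raiseVec E l q v₀ k ∧
      casimir K H E F (raiseVec E l q v₀ k) = q • raiseVec E l q v₀ k := by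
  induction k with
  | zero => simpa [raiseVec] using ⟨hv, hc⟩
  | succ k ih =>
    simp only [raiseVec, lie_smul, map_smul, lie_h_lie_e hHE ih.1, casimir_lie_e hHE hEF, ih.2]
    constructor <;> (push_cast; module)

theorem lowerVec_eigen (hHF : ⁅H, F⁆ = (-2 : K) • F) (hEF : ⁅E, F⁆ = H) (hv : ⁅H, v₀⁆ = l • v₀)
    (hc : casimir K H E F v₀ = q • v₀) (k : ℕ) :
    ⁅H, lowerVec F v₀ k⁆ = (l + 2 * (-k : ℤ)) • lowerVec F v₀ k ∧
      casimir K H E F (lowerVec F v₀ k) = q • lowerVec F v₀ k := by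
  induction k with
  | zero => simpa [lowerVec] using ⟨hv, hc⟩
  | succ k ih =>
    refine ⟨?_, by rw [lowerVec, casimir_lie_f hHF hEF, ih.2, lie_smul]⟩
    rw [lowerVec, lie_h_lie_f hHF ih.1]
    push_cast
    module

theorem chainVec_eigen (hHE : ⁅H, E⁆ = (2 : K) • E) (hHF : ⁅H, F⁆ = (-2 : K) • F)
    (hEF : ⁅E, F⁆ = H) (hv : ⁅H, v₀⁆ = l • v₀) (hc : casimir K H E F v₀ = q • v₀) (n : ℤ) :
    ⁅H, chainVec E F l q v₀ n⁆ = (l + 2 * n) • chainVec E F l q v₀ n ∧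
      casimir K H E F (chainVec E F l q v₀ n) = q • chainVec E F l q v₀ n := by
  rcases Int.eq_nat_or_neg n with ⟨k, rfl | rfl⟩
  · exact_mod_cast raiseVec_eigen hHE hEF hv hc k
  · rw [chainVec_neg_natCast]
    exact lowerVec_eigen hHF hEF hv hc k

theorem lie_f_chainVec (hHE : ⁅H, E⁆ = (2 : K) • E) (hEF : ⁅E, F⁆ = H) (hv : ⁅H, v₀⁆ = l • v₀)
    (hc : casimir K H E F v₀ = q • v₀) (hne : ∀ k : ℕ, eCoeff l q k ≠ 0) (n : ℤ) :
    ⁅F, chainVec E F l q v₀ n⁆ = chainVec E F l q v₀ (n - 1) := by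
  match n with
  | 0 => rfl
  | (k + 1 : ℕ) =>
    have hk := raiseVec_eigen hHE hEF hv hc k
    have hFE := lie_f_lie_e_of_casimir hEF (n := k) (by exact_mod_cast hk.1) hk.2
    rw [show ((k + 1 : ℕ) : ℤ) - 1 = k by push_cast; ring]
    simp only [chainVec, raiseVec, lie_smul, hFE, smul_smul, inv_mul_cancel₀ (hne k), one_smul]
  | .negSucc k => rfl

theorem lie_e_chainVec (hHF : ⁅H, F⁆ = (-2 : K) • F) (hEF : ⁅E, F⁆ = H) (hv : ⁅H, v₀⁆ = l • v₀)
    (hc : casimir K H E F v₀ = q • v₀) (hne : ∀ k : ℕ, eCoeff l q k ≠ 0) (n : ℤ) :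
    ⁅E, chainVec E F l q v₀ n⁆ = eCoeff l q n • chainVec E F l q v₀ (n + 1) := by
  match n with
  | (k : ℕ) =>
    rw [show (k : ℤ) + 1 = (k + 1 : ℕ) by push_cast; rfl, chainVec_natCast, chainVec_natCast,
      raiseVec, smul_smul, mul_inv_cancel₀ (hne k), one_smul]
  | .negSucc k =>
    have hk := lowerVec_eigen hHF hEF hv hc k
    change ⁅E, ⁅F, lowerVec F v₀ k⁆⁆ = _
    rw [lie_e_lie_f_of_casimir hEF hk.1 hk.2,
      show Int.negSucc k + 1 = -k by rw [Int.negSucc_eq]; ring, chainVec_neg_natCast,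
      show (-k - 1 : ℤ) = Int.negSucc k by rw [Int.negSucc_eq]; ring]

end Chain

noncomputable section

/-! `D_{l;q}` on the basis `δₙ = single n 1` of `ℤ →₀ K`, with `δₙ` of weight `l + 2n`. -/
namespace InducedModule

variable {K : Type*} [Field K]

def hOp (l : K) : Module.End K (ℤ →₀ K) := lsum K fun n => (l + 2 * n) • lsingle n

def eOp (l q : K) : Module.End K (ℤ →₀ K) := lsum K fun n => eCoeff l q n • lsingle (n + 1)

variable (K) in
def fOp : Module.End K (ℤ →₀ K) := lmapDomain K K (· - 1)

@[simp] theorem hOp_single (l : K) (n : ℤ) (c : K) :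
    hOp l (single n c) = (l + 2 * n) • single n c := by
  simp [hOp]

@[simp] theorem eOp_single (l q : K) (n : ℤ) (c : K) :
    eOp l q (single n c) = eCoeff l q n • single (n + 1) c := by
  simp [eOp]

@[simp] theorem fOp_single (n : ℤ) (c : K) : fOp K (single n c) = single (n - 1) c := by
  simp [fOp]

theorem fOp_injective : Function.Injective (fOp K) :=
  mapDomain_injective (sub_left_injective (b := 1))

theorem eCoeff_two_zero [CharZero K] (n : ℤ) : eCoeff (2 : K) 0 n = -((n + 1) * (n + 2)) := by
  simp only [eCoeff]
  ring

theorem lie_hOp_eOp (l q : K) : ⁅hOp l, eOp l q⁆ = (2 : K) • eOp l q := by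
  refine lhom_ext fun n c => ?_
  simp only [LieRing.of_associative_ring_bracket, LinearMap.sub_apply, Module.End.mul_apply,
    LinearMap.smul_apply, hOp_single, eOp_single, map_smul, smul_smul, ← sub_smul]
  push_cast
  ring_nf

theorem lie_hOp_fOp (l : K) : ⁅hOp l, fOp K⁆ = (-2 : K) • fOp K := by
  refine lhom_ext fun n c => ?_
  simp only [LieRing.of_associative_ring_bracket, LinearMap.sub_apply, Module.End.mul_apply,
    LinearMap.smul_apply, hOp_single, fOp_single, map_smul, ← sub_smul]
  push_cast
  ring_nf

theorem lie_eOp_fOp [CharZero K] (l q : K) : ⁅eOp l q, fOp K⁆ = hOp l := by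
  refine lhom_ext fun n c => ?_
  simp only [LieRing.of_associative_ring_bracket, LinearMap.sub_apply, Module.End.mul_apply,
    hOp_single, eOp_single, fOp_single, map_smul, sub_add_cancel, add_sub_cancel_right,
    ← sub_smul]
  congr 1
  simp only [eCoeff]
  push_cast
  ring

theorem eOp_fOp_add_fOp_eOp_single_zero [CharZero K] (l q : K) :
    eOp l q (fOp K (single 0 1)) + fOp K (eOp l q (single 0 1)) +
      (2⁻¹ : K) • hOp l (hOp l (single 0 1)) = q • single 0 1 := by
  simp only [fOp_single, eOp_single, hOp_single, map_smul, smul_smul, zero_sub, neg_add_cancel,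
    zero_add, sub_self]
  rw [← add_smul, ← add_smul]
  congr 1
  simp only [eCoeff]
  push_cast
  ring

theorem supported_Iic_le_comap_hOp (l : K) (n : ℤ) :
    supported K K (Set.Iic n) ≤ (supported K K (Set.Iic n)).comap (hOp l) := by
  rw [supported_eq_span_single, Submodule.span_le]
  rintro _ ⟨k, hk, rfl⟩
  rw [SetLike.mem_coe, Submodule.mem_comap, hOp_single, ← supported_eq_span_single]
  exact Submodule.smul_mem _ _ (single_mem_supported K 1 hk)

theorem supported_Iic_le_comap_fOp (n : ℤ) :
    supported K K (Set.Iic n) ≤ (supported K K (Set.Iic n)).comap (fOp K) := by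
  rw [supported_eq_span_single, Submodule.span_le]
  rintro _ ⟨k, hk, rfl⟩
  rw [SetLike.mem_coe, Submodule.mem_comap, fOp_single, ← supported_eq_span_single]
  exact single_mem_supported K 1 (by simp only [Set.mem_Iic] at hk ⊢; omega)

theorem supported_Iic_le_comap_eOp {l q : K} {n : ℤ} (hn : eCoeff l q n = 0) :
    supported K K (Set.Iic n) ≤ (supported K K (Set.Iic n)).comap (eOp l q) := by
  rw [supported_eq_span_single, Submodule.span_le]
  rintro _ ⟨k, hk, rfl⟩
  rw [SetLike.mem_coe, Submodule.mem_comap, eOp_single, ← supported_eq_span_single]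
  rcases (Set.mem_Iic.1 hk).lt_or_eq with hk | rfl
  · exact Submodule.smul_mem _ _ (single_mem_supported K 1 (Int.add_one_le_of_lt hk))
  · rw [hn, zero_smul]
    exact Submodule.zero_mem _

attribute [local instance] LieRing.ofAssociativeRing

theorem exists_lieHom [CharZero K] {g : Type*} [LieRing g] [LieAlgebra K g] {H E F : g}
    (t : IsSl2Triple H E F) (hspan : Submodule.span K {H, E, F} = ⊤) (l q : K) :
    ∃ ρ : g →ₗ⁅K⁆ Module.End K (ℤ →₀ K), ρ H = hOp l ∧ ρ E = eOp l q ∧ ρ F = fOp K :=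
  t.exists_lieHom hspan (lie_hOp_eOp l q) (lie_hOp_fOp l) (lie_eOp_fOp l q)

section ChainMap

variable {g M : Type*} [LieRing g] [AddCommGroup M] [Module K M] [LieRingModule g M]

def chainMap (E F : g) (l q : K) (v₀ : M) : (ℤ →₀ K) →ₗ[K] M :=
  linearCombination K (chainVec E F l q v₀)

variable {E F : g}

theorem chainMap_single (l q : K) (v₀ : M) (n : ℤ) (c : K) :
    chainMap E F l q v₀ (single n c) = c • chainVec E F l q v₀ n :=
  linearCombination_single K c n

variable [CharZero K] [LieAlgebra K g] [LieModule K g M] {H : g} {l q : K} {v₀ : M}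

theorem chainMap_hOp (hHE : ⁅H, E⁆ = (2 : K) • E) (hHF : ⁅H, F⁆ = (-2 : K) • F)
    (hEF : ⁅E, F⁆ = H) (hv : ⁅H, v₀⁆ = l • v₀) (hc : casimir K H E F v₀ = q • v₀)
    (f : ℤ →₀ K) : chainMap E F l q v₀ (hOp l f) = ⁅H, chainMap E F l q v₀ f⁆ := by
  induction f using Finsupp.induction_linear with
  | zero => simp
  | add f₁ f₂ h₁ h₂ => rw [map_add, map_add, h₁, h₂, map_add, lie_add]
  | single n c =>
    rw [hOp_single, map_smul, chainMap_single, lie_smul, (chainVec_eigen hHE hHF hEF hv hc n).1,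
      smul_comm]

theorem chainMap_eOp (hHF : ⁅H, F⁆ = (-2 : K) • F) (hEF : ⁅E, F⁆ = H) (hv : ⁅H, v₀⁆ = l • v₀)
    (hc : casimir K H E F v₀ = q • v₀) (hne : ∀ k : ℕ, eCoeff l q k ≠ 0)
    (f : ℤ →₀ K) : chainMap E F l q v₀ (eOp l q f) = ⁅E, chainMap E F l q v₀ f⁆ := by
  induction f using Finsupp.induction_linear with
  | zero => simp
  | add f₁ f₂ h₁ h₂ => rw [map_add, map_add, h₁, h₂, map_add, lie_add]
  | single n c =>
    rw [eOp_single, map_smul, chainMap_single, chainMap_single, lie_smul,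
      lie_e_chainVec hHF hEF hv hc hne, smul_comm]

theorem chainMap_fOp (hHE : ⁅H, E⁆ = (2 : K) • E) (hEF : ⁅E, F⁆ = H) (hv : ⁅H, v₀⁆ = l • v₀)
    (hc : casimir K H E F v₀ = q • v₀) (hne : ∀ k : ℕ, eCoeff l q k ≠ 0)
    (f : ℤ →₀ K) : chainMap E F l q v₀ (fOp K f) = ⁅F, chainMap E F l q v₀ f⁆ := by
  induction f using Finsupp.induction_linear with
  | zero => simp
  | add f₁ f₂ h₁ h₂ => rw [map_add, map_add, h₁, h₂, map_add, lie_add]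
  | single n c =>
    rw [fOp_single, chainMap_single, chainMap_single, lie_smul, lie_f_chainVec hHE hEF hv hc hne]

end ChainMap

theorem exists_injective_linearMap {K M : Type u} {g : Type*} [Field K] [CharZero K] [LieRing g]
    [LieAlgebra K g] [AddCommGroup M] [Module K M] [LieRingModule g M] [LieModule K g M]
    {H E F : g} (hH : H ≠ 0) (hHE : ⁅H, E⁆ = (2 : K) • E) (hHF : ⁅H, F⁆ = (-2 : K) • F)
    (hEF : ⁅E, F⁆ = H) (hspan : Submodule.span K {H, E, F} = ⊤) {l q : K}
    (hne : ∀ k : ℕ, eCoeff l q k ≠ 0) {v₀ : M} (hv : ⁅H, v₀⁆ = l • v₀)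
    (hc : casimir K H E F v₀ = q • v₀)
    (huniv : ∀ (M' : Type u) [AddCommGroup M'] [Module K M'] [LieRingModule g M']
      [LieModule K g M'] (v' : M'), ⁅H, v'⁆ = l • v' → casimir K H E F v' = q • v' →
      ∃! φ : M →ₗ[K] M', (∀ (x : g) (m : M), φ ⁅x, m⁆ = ⁅x, φ m⁆) ∧ φ v₀ = v') :
    ∃ φ : M →ₗ[K] (ℤ →₀ K), Function.Injective φ ∧ φ v₀ = single 0 1 ∧
      (∀ m, φ ⁅H, m⁆ = hOp l (φ m)) ∧ (∀ m, φ ⁅E, m⁆ = eOp l q (φ m)) ∧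
      (∀ m, φ ⁅F, m⁆ = fOp K (φ m)) := by
  have t : IsSl2Triple H E F :=
    ⟨hH, hEF, by rw [hHE, two_smul, two_smul], by rw [hHF, neg_smul, two_smul, two_smul]⟩
  obtain ⟨ρ, hρH, hρE, hρF⟩ := exists_lieHom t hspan l q
  let _ := LieRingModule.compLieHom (ℤ →₀ K) ρ
  have _ := LieModule.compLieHom (ℤ →₀ K) ρ
  have bracket : ∀ x f, ⁅x, f⁆ = ρ x f := fun _ _ => rfl
  obtain ⟨φ, ⟨hφ, hφv⟩, -⟩ := huniv (ℤ →₀ K) (single 0 1)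
    (by rw [bracket, hρH, hOp_single]; simp)
    (by simpa only [casimir_apply, bracket, hρH, hρE, hρF]
      using eOp_fOp_add_fOp_eOp_single_zero l q)
  have hψ := LinearMap.map_lie_of_span_eq_top hspan (chainMap E F l q v₀)
    (fun f => by rw [bracket, hρH]; exact chainMap_hOp hHE hHF hEF hv hc f)
    (fun f => by rw [bracket, hρE]; exact chainMap_eOp hHF hEF hv hc hne f)
    (fun f => by rw [bracket, hρF]; exact chainMap_fOp hHE hEF hv hc hne f)
  obtain ⟨θ, -, hθ⟩ := huniv M v₀ hv hc
  have hψφ : chainMap E F l q v₀ ∘ₗ φ = LinearMap.id :=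
    (hθ _ ⟨fun x m => by rw [LinearMap.comp_apply, LinearMap.comp_apply, hφ, hψ],
      by rw [LinearMap.comp_apply, hφv, chainMap_single, one_smul, chainVec_zero]⟩).trans
      (hθ _ ⟨fun _ _ => rfl, rfl⟩).symm
  refine ⟨φ, Function.LeftInverse.injective (g := chainMap E F l q v₀) (LinearMap.congr_fun hψφ),
    hφv, fun m => ?_, fun m => ?_, fun m => ?_⟩
  · rw [hφ, bracket, hρH]
  · rw [hφ, bracket, hρE]
  · rw [hφ, bracket, hρF]

section Embedding

variable {K g M : Type*} [Field K] [LieRing g] [AddCommGroup M] [Module K M] [LieRingModule g M]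
  {H E F : g} {l q : K} {φ : M →ₗ[K] (ℤ →₀ K)} {m : M} {n : ℤ} {c : K}

theorem lie_h_eq_of_map_eq_single (hφ : Function.Injective φ)
    (hφH : ∀ m, φ ⁅H, m⁆ = hOp l (φ m)) (h : φ m = single n c) :
    ⁅H, m⁆ = (l + 2 * n) • m :=
  hφ (by rw [hφH, h, hOp_single, map_smul, h])

theorem lie_e_eq_zero_of_map_eq_single (hφ : Function.Injective φ)
    (hφE : ∀ m, φ ⁅E, m⁆ = eOp l q (φ m)) (hn : eCoeff l q n = 0) (h : φ m = single n c) :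
    ⁅E, m⁆ = 0 :=
  hφ (by rw [hφE, h, eOp_single, hn, zero_smul, map_zero])

theorem exists_lieSubmodule_ne_bot_ne_top [LieAlgebra K g] [LieModule K g M]
    (hspan : Submodule.span K {H, E, F} = ⊤)
    (hφH : ∀ m, φ ⁅H, m⁆ = hOp l (φ m)) (hφE : ∀ m, φ ⁅E, m⁆ = eOp l q (φ m))
    (hφF : ∀ m, φ ⁅F, m⁆ = fOp K (φ m)) (hn : eCoeff l q n = 0) (hn0 : n < 0) {v₀ u : M}
    (hv : φ v₀ = single 0 1) (hu : φ u = single n 1) :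
    ∃ Q : LieSubmodule K g M, Q ≠ ⊥ ∧ Q ≠ ⊤ := by
  let Q := Submodule.toLieSubmoduleOfSpan hspan ((supported K K (Set.Iic n)).comap φ)
    (fun m hm => by rw [Submodule.mem_comap, hφH]; exact supported_Iic_le_comap_hOp l n hm)
    (fun m hm => by rw [Submodule.mem_comap, hφE]; exact supported_Iic_le_comap_eOp hn hm)
    (fun m hm => by rw [Submodule.mem_comap, hφF]; exact supported_Iic_le_comap_fOp n hm)
  have huQ : u ∈ Q := show φ u ∈ supported K K _ by
    rw [hu]
    exact single_mem_supported K 1 (Set.mem_Iic.2 le_rfl)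
  have hv₀Q : v₀ ∉ Q := show φ v₀ ∉ supported K K _ by
    simpa [hv, mem_supported] using hn0.not_ge
  refine ⟨Q, fun hQ => ?_, fun hQ => hv₀Q (hQ ▸ LieSubmodule.mem_top v₀)⟩
  rw [hQ, LieSubmodule.mem_bot] at huQ
  rw [huQ, map_zero] at hu
  exact one_ne_zero (single_eq_zero.1 hu.symm)

end Embedding

end InducedModule

end

open InducedModule

/-- `D` is characterised by its cyclic vector `v₀` and the universal property of induction. -/
theorem induced_module_two_zero_not_simple_general
    (g : Type) [LieRing g] [LieAlgebra ℂ g]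
    (H E F : g)
    (hHE : ⁅H, E⁆ = (2 : ℂ) • E) (hHF : ⁅H, F⁆ = (-2 : ℂ) • F) (hEF : ⁅E, F⁆ = H)
    (hspan : Submodule.span ℂ {H, E, F} = ⊤)
    (M : Type) [AddCommGroup M] [Module ℂ M] [LieRingModule g M] [LieModule ℂ g M]
    (v₀ : M) (hv₀ : v₀ ≠ 0)
    (hHv : ⁅H, v₀⁆ = (2 : ℂ) • v₀)
    (hΩv : ⁅E, ⁅F, v₀⁆⁆ + ⁅F, ⁅E, v₀⁆⁆ + (2⁻¹ : ℂ) • ⁅H, ⁅H, v₀⁆⁆ = 0)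
    (huniv : ∀ (M' : Type) [AddCommGroup M'] [Module ℂ M'] [LieRingModule g M']
      [LieModule ℂ g M'] (v' : M'),
      ⁅H, v'⁆ = (2 : ℂ) • v' →
      ⁅E, ⁅F, v'⁆⁆ + ⁅F, ⁅E, v'⁆⁆ + (2⁻¹ : ℂ) • ⁅H, ⁅H, v'⁆⁆ = 0 →
      ∃! φ : M →ₗ[ℂ] M', (∀ (x : g) (m : M), φ ⁅x, m⁆ = ⁅x, φ m⁆) ∧ φ v₀ = v') :
    (∃ Q : LieSubmodule ℂ g M, Q ≠ ⊥ ∧ Q ≠ ⊤) ∧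
      (∃ u w : M, u ≠ 0 ∧ w ≠ 0 ∧ ⁅E, u⁆ = 0 ∧ ⁅E, w⁆ = 0 ∧
        ⁅H, u⁆ = (-2 : ℂ) • u ∧ ⁅H, w⁆ = 0 ∧ u = ⁅F, w⁆) ∧
      Function.Injective (fun m : M => ⁅F, m⁆) := by
  have hH : H ≠ 0 := by
    rintro rfl
    exact hv₀ ((smul_eq_zero.1 (hHv.symm.trans (zero_lie v₀))).resolve_left two_ne_zero)
  have hne (k : ℕ) : eCoeff (2 : ℂ) 0 k ≠ 0 := by
    rw [eCoeff_two_zero, neg_ne_zero]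
    exact_mod_cast (by positivity : (k + 1) * (k + 2) ≠ 0)
  obtain ⟨φ, hφ, hφv, hφH, hφE, hφF⟩ := exists_injective_linearMap hH hHE hHF hEF hspan hne hHv
    (hΩv.trans (zero_smul ℂ v₀).symm)
    fun M' _ _ _ _ v' hH' hc' => huniv M' v' hH' (hc'.trans (zero_smul ℂ v'))
  have hw : φ ⁅F, v₀⁆ = single (-1) 1 := by rw [hφF, hφv, fOp_single]; rfl
  have hu : φ ⁅F, ⁅F, v₀⁆⁆ = single (-2) 1 := by rw [hφF, hw, fOp_single]; rfl
  have hcoeff : eCoeff (2 : ℂ) 0 (-2) = 0 ∧ eCoeff (2 : ℂ) 0 (-1) = 0 := by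
    norm_num [eCoeff_two_zero]
  refine ⟨exists_lieSubmodule_ne_bot_ne_top hspan hφH hφE hφF hcoeff.1 (by norm_num) hφv hu,
    ⟨⁅F, ⁅F, v₀⁆⁆, ⁅F, v₀⁆, ne_zero_of_map (f := φ) (by simp [hu]),
      ne_zero_of_map (f := φ) (by simp [hw]),
      lie_e_eq_zero_of_map_eq_single hφ hφE hcoeff.1 hu,
      lie_e_eq_zero_of_map_eq_single hφ hφE hcoeff.2 hw, ?_, ?_, rfl⟩,
    fun a b h => hφ (fOp_injective (by simpa [← hφF] using congrArg φ h))⟩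
  · rw [lie_h_eq_of_map_eq_single hφ hφH hu]
    norm_num
  · simpa using lie_h_eq_of_map_eq_single hφ hφH hw

/-- The `sl₂`-module `D = D_{2;0}`, induced from the one-dimensional `ℂ[H,Ω]`-module with
`H`-eigenvalue `2` and Casimir eigenvalue `0` (characterised by its cyclic vector `v₀` and
the universal property of induction), is not simple: it contains highest-weight vectors `u`
of `H`-eigenvalue `−2` and `w` of `H`-eigenvalue `0` with `E·u = 0`, `E·w = 0` and
`u = F·w`, and `F` acts injectively on all of `D`. -/
theorem induced_module_two_zero_not_simple
    (g : Type) [LieRing g] [LieAlgebra ℂ g]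
    (H E F : g)
    (hHE : ⁅H, E⁆ = (2 : ℂ) • E) (hHF : ⁅H, F⁆ = (-2 : ℂ) • F) (hEF : ⁅E, F⁆ = H)
    (hspan : Submodule.span ℂ {H, E, F} = ⊤)
    (M : Type) [AddCommGroup M] [Module ℂ M] [LieRingModule g M] [LieModule ℂ g M]
    (v₀ : M) (hv₀ : v₀ ≠ 0)
    (hHv : ⁅H, v₀⁆ = (2 : ℂ) • v₀)
    (hΩv : ⁅E, ⁅F, v₀⁆⁆ + ⁅F, ⁅E, v₀⁆⁆ + (2⁻¹ : ℂ) • ⁅H, ⁅H, v₀⁆⁆ = 0)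
    (hgen : LieSubmodule.lieSpan ℂ g {v₀} = ⊤)
    (huniv : ∀ (M' : Type) [AddCommGroup M'] [Module ℂ M'] [LieRingModule g M']
      [LieModule ℂ g M'] (v' : M'),
      ⁅H, v'⁆ = (2 : ℂ) • v' →
      ⁅E, ⁅F, v'⁆⁆ + ⁅F, ⁅E, v'⁆⁆ + (2⁻¹ : ℂ) • ⁅H, ⁅H, v'⁆⁆ = 0 →
      ∃! φ : M →ₗ[ℂ] M', (∀ (x : g) (m : M), φ ⁅x, m⁆ = ⁅x, φ m⁆) ∧ φ v₀ = v') :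
    (∃ Q : LieSubmodule ℂ g M, Q ≠ ⊥ ∧ Q ≠ ⊤) ∧
      (∃ u w : M, u ≠ 0 ∧ w ≠ 0 ∧ ⁅E, u⁆ = 0 ∧ ⁅E, w⁆ = 0 ∧
        ⁅H, u⁆ = (-2 : ℂ) • u ∧ ⁅H, w⁆ = 0 ∧ u = ⁅F, w⁆) ∧
      Function.Injective (fun m : M => ⁅F, m⁆) :=
  induced_module_two_zero_not_simple_general g H E F hHE hHF hEF hspan M v₀ hv₀ hHv hΩv huniv
end
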